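/- arXiv:1410.7306 — 9 statements merged into one kernel-verified Lean document; each statement's English description precedes it below -/
import Mathlib

section
/- Let P ⊂ l∞^n be a convex polyhedron with nonempty interior. Then P (with the induced l∞-metric) is injective if and only if the tangent cone T_pP (with the induced l∞-metric) is injective for every boundary point p ∈ ∂P. -/
/-!
In `l∞ⁿ` a set is injective exactly when it is a `1`-Lipschitz retract of the whole space.

If `r` retracts onto `P` and `p ∈ P`, conjugating `r` by the homotheties of ratio `k + 1`
centred at `p` gives retractions onto the increasing sets `p + (k + 1) (P - p)`, whose union is
the tangent cone; a pointwise limit along an ultrafilter (closed balls are compact) retracts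
onto the closed cone `T_p P`.

Conversely, near each of its points `P` coincides with a retract containing it (its tangent
cone, or the whole space). This makes `P` hyperconvex: given pairwise compatible balls
`B(cᵢ, ρᵢ)` centred in `P`, take `q ∈ P` in the smallest enlargement `⋂ B(cᵢ, ρᵢ + μ)` that
meets `P`. If `μ > 0`, clamping `q` coordinatewise into a slightly smaller enlargement moves it
by at most `ε`, and the local retraction brings the clamped point back into `P` without
increasing its distances to the `cᵢ`. A closed hyperconvex set is a retract: retractions of
`P ∪ F`, `F` finite, are built one point at a time, and an ultrafilter limit over `F` retracts
the whole space.
-/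

open Set Metric

/-- A metric space `X` is *injective* if for all metric spaces `A`, `B`, every isometric
embedding `i : A → B` and every `1`-Lipschitz map `f : A → X`, there is a `1`-Lipschitz
map `g : B → X` with `g ∘ i = f`. -/
def IsInjectiveMetricSpace (X : Type) [MetricSpace X] : Prop :=
  ∀ (A B : Type) [MetricSpace A] [MetricSpace B], ∀ (i : A → B) (f : A → X),
    Isometry i → LipschitzWith 1 f →
      ∃ g : B → X, LipschitzWith 1 g ∧ ∀ a, g (i a) = f a

/-- A subset of `l∞ⁿ = (Fin n → ℝ)` (whose product metric is the sup-metric) is injective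
if it is an injective metric space with the induced metric. -/
def IsInjectiveSubset {n : ℕ} (S : Set (Fin n → ℝ)) : Prop :=
  IsInjectiveMetricSpace S

/-- A convex polyhedron in `ℝⁿ` is a finite intersection of closed half-spaces. -/
def IsConvexPolyhedron {n : ℕ} (P : Set (Fin n → ℝ)) : Prop :=
  ∃ (m : ℕ) (ν : Fin m → (Fin n → ℝ)) (c : Fin m → ℝ),
    (∀ i, ν i ≠ 0) ∧ P = ⋂ i, {x | c i ≤ ∑ j, ν i j * x j}

/-- The tangent cone `T_p P = ⋃_{m ∈ ℕ} (p + m (P - p))`. -/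
def tangentCone {n : ℕ} (P : Set (Fin n → ℝ)) (p : Fin n → ℝ) : Set (Fin n → ℝ) :=
  ⋃ m : ℕ, (fun x => p + (m : ℝ) • (x - p)) '' P

open Filter Topology AffineMap

def IsNonexpansiveRetract {E : Type*} [PseudoMetricSpace E] (S : Set E) : Prop :=
  ∃ r : E → E, LipschitzWith 1 r ∧ (∀ x, r x ∈ S) ∧ ∀ x ∈ S, r x = x

section Injective

variable {E : Type} [MetricSpace E] {S : Set E}

theorem IsInjectiveMetricSpace.isNonexpansiveRetract (h : IsInjectiveMetricSpace S) :
    IsNonexpansiveRetract S := by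
  obtain ⟨g, hg, hgS⟩ := h S E (↑) id isometry_subtype_coe LipschitzWith.id
  exact ⟨fun x => g x, LipschitzWith.of_dist_le_mul fun x y => hg.dist_le_mul x y,
    fun x => (g x).2, fun x hx => congrArg Subtype.val (hgS ⟨x, hx⟩)⟩

theorem IsNonexpansiveRetract.isInjectiveMetricSpace (hE : IsInjectiveMetricSpace E)
    (hS : IsNonexpansiveRetract S) : IsInjectiveMetricSpace S := by
  obtain ⟨r, hr, hrS, hrfix⟩ := hS
  intro A B _ _ i f hi hf
  obtain ⟨g, hg, hgi⟩ := hE A B i ((↑) ∘ f) hi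
    (by simpa using (LipschitzWith.subtype_val S).comp hf)
  refine ⟨fun b => ⟨r (g b), hrS _⟩, by simpa using (hr.comp hg).subtype_mk fun b => hrS (g b),
    fun a => ?_⟩
  ext
  simp only [hgi, Function.comp_apply, hrfix _ (f a).2]

theorem isInjectiveMetricSpace_pi {ι : Type} [Fintype ι] : IsInjectiveMetricSpace (ι → ℝ) := by
  intro A B _ _ i f hi hf
  have hext : LipschitzOnWith 1 (Function.extend i f 0) (range i) := by
    rintro _ ⟨a, rfl⟩ _ ⟨a', rfl⟩
    simpa [hi.injective.extend_apply, hi.edist_eq] using hf a a'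
  obtain ⟨g, hg, hfg⟩ := hext.extend_pi
  exact ⟨g, hg, fun a => (hfg (mem_range_self a)).symm.trans (hi.injective.extend_apply f 0 a)⟩

theorem isInjectiveSubset_iff {n : ℕ} {S : Set (Fin n → ℝ)} :
    IsInjectiveSubset S ↔ IsNonexpansiveRetract S :=
  ⟨IsInjectiveMetricSpace.isNonexpansiveRetract,
    fun h => h.isInjectiveMetricSpace isInjectiveMetricSpace_pi⟩

end Injective

theorem isNonexpansiveRetract_of_eventually {E : Type*} [MetricSpace E] [ProperSpace E]
    {T : Set E} (hT : IsClosed T) {α : Type*} {l : Filter α} [l.NeBot] (s : α → E → E)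
    (hlip : ∀ x y, ∀ᶠ a in l, dist (s a x) (s a y) ≤ dist x y)
    (hmem : ∀ x, ∀ᶠ a in l, s a x ∈ T) (hfix : ∀ x ∈ T, ∀ᶠ a in l, s a x = x) :
    IsNonexpansiveRetract T := by
  set U := Ultrafilter.of l
  have hU : (U : Filter α) ≤ l := Ultrafilter.of_le l
  have hlim : ∀ x, ∃ y, Tendsto (s · x) U (𝓝 y) := by
    intro x
    obtain ⟨a, ha⟩ := (hmem x).exists
    have hball : ∀ᶠ b in l, s b x ∈ closedBall (s a x) (dist x (s a x)) := by
      filter_upwards [hlip x (s a x), hfix _ ha] with b hb hbt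
      simpa [hbt] using hb
    obtain ⟨y, -, hy⟩ := (isCompact_closedBall _ _).ultrafilter_le_nhds (U.map (s · x))
      (le_principal_iff.2 (hU hball))
    exact ⟨y, hy⟩
  choose r hr using hlim
  refine ⟨r, LipschitzWith.of_dist_le_mul fun x y => ?_,
    fun x => hT.mem_of_tendsto (hr x) (hU (hmem x)), fun x hx => ?_⟩
  · simpa using le_of_tendsto ((hr x).dist (hr y)) (hU (hlip x y))
  · exact tendsto_nhds_unique (hr x)
      (tendsto_const_nhds.congr' (EventuallyEq.symm (hU (hfix x hx))))

def IsHyperconvex {E : Type*} [PseudoMetricSpace E] (S : Set E) : Prop :=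
  ∀ (ι : Type) [Nonempty ι] (c : ι → E) (ρ : ι → ℝ), (∀ i, c i ∈ S) →
    (∀ i j, dist (c i) (c j) ≤ ρ i + ρ j) → ∃ y ∈ S, ∀ i, dist y (c i) ≤ ρ i

section Hyperconvex

variable {E : Type} [MetricSpace E] {S : Set E}

theorem IsHyperconvex.exists_extension (hS : IsHyperconvex S) {D : Set E} (hD : D.Nonempty)
    {f : E → E} (hf : LipschitzOnWith 1 f D) (hfS : MapsTo f D S) (z : E) :
    ∃ g : E → E, LipschitzOnWith 1 g (insert z D) ∧ MapsTo g (insert z D) S ∧ EqOn g f D := by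
  classical
  have := hD.to_subtype
  obtain ⟨y, hyS, hy⟩ := hS D (fun d => f d) (fun d => dist z d) (fun d => hfS d.2)
    fun d d' => by
      have : dist (f d) (f d') ≤ dist (d : E) d' := by simpa using hf.dist_le_mul d d.2 d' d'.2
      linarith [dist_triangle_left (d : E) d' z]
  have hy' : ∀ d ∈ D, dist y (f d) ≤ dist z d := fun d hd => hy ⟨d, hd⟩
  -- when `z ∈ D` the choice of `y` is forced to be `f z`
  have hgf : EqOn (Function.update f z y) f D := by
    intro d hd
    rcases eq_or_ne d z with rfl | hdz
    · simpa using hy' d hd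
    · exact Function.update_of_ne hdz _ _
  refine ⟨Function.update f z y, LipschitzOnWith.of_dist_le_mul ?_, ?_, hgf⟩
  · rintro x (rfl | hx) x' (rfl | hx')
    · simp
    · simpa [hgf hx'] using hy' x' hx'
    · simpa [hgf hx, dist_comm] using hy' x hx
    · simpa [hgf hx, hgf hx'] using hf.dist_le_mul x hx x' hx'
  · rintro x (rfl | hx)
    · simpa using hyS
    · simpa [hgf hx] using hfS hx

theorem IsHyperconvex.exists_retraction_finset (hS : IsHyperconvex S) (hne : S.Nonempty)
    (F : Finset E) :
    ∃ g : E → E, LipschitzOnWith 1 g (S ∪ F) ∧ MapsTo g (S ∪ F) S ∧ EqOn g id S := by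
  classical
  induction F using Finset.induction_on with
  | empty =>
    exact ⟨id, by simpa using LipschitzWith.id.lipschitzOnWith, by simpa using mapsTo_id S,
      eqOn_refl _ _⟩
  | insert a F _ ih =>
    obtain ⟨f, hf, hfS, hfid⟩ := ih
    obtain ⟨g, hg, hgS, hgf⟩ := hS.exists_extension (hne.mono subset_union_left) hf hfS a
    rw [Finset.coe_insert, union_insert]
    exact ⟨g, hg, hgS, (hgf.mono subset_union_left).trans hfid⟩

theorem IsHyperconvex.isNonexpansiveRetract [ProperSpace E] (hS : IsHyperconvex S)
    (hSc : IsClosed S) (hne : S.Nonempty) : IsNonexpansiveRetract S := by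
  classical
  choose g hg hgS hgid using hS.exists_retraction_finset hne
  have hev : ∀ x, ∀ᶠ F : Finset E in atTop, x ∈ S ∪ (F : Set E) := fun x =>
    (eventually_ge_atTop ({x} : Finset E)).mono fun F hF =>
      Or.inr (Finset.mem_coe.2 (Finset.singleton_subset_iff.1 hF))
  refine isNonexpansiveRetract_of_eventually hSc g (fun x y => ?_)
    (fun x => (hev x).mono fun F hF => hgS F hF)
    (fun x hx => Eventually.of_forall fun F => hgid F hx)
  filter_upwards [hev x, hev y] with F hx hy
  simpa using (hg F).dist_le_mul x hx y hy

end Hyperconvex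

theorem Real.exists_dist_le_forall_dist_le {ι : Type*} [Nonempty ι] {c ρ : ι → ℝ}
    (hc : ∀ i j, dist (c i) (c j) ≤ ρ i + ρ j) {q ε : ℝ} (hε : 0 ≤ ε)
    (hq : ∀ i, dist q (c i) ≤ ρ i + ε) : ∃ y, dist y q ≤ ε ∧ ∀ i, dist y (c i) ≤ ρ i := by
  obtain ⟨i₀⟩ := ‹Nonempty ι›
  have hlow : ∀ i j, c i - ρ i ≤ c j + ρ j := fun i j => by
    linarith [(abs_sub_le_iff.1 (Real.dist_eq _ _ ▸ hc i j)).1]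
  have hqi : ∀ i, |q - c i| ≤ ρ i + ε := fun i => Real.dist_eq q (c i) ▸ hq i
  have ha : BddAbove (range fun i => c i - ρ i) := ⟨_, forall_mem_range.2 fun i => hlow i i₀⟩
  have hb : BddBelow (range fun i => c i + ρ i) := ⟨_, forall_mem_range.2 fun i => hlow i₀ i⟩
  -- clamp `q` to the interval `[a, b] = ⋂ i, [c i - ρ i, c i + ρ i]`
  set a := ⨆ i, (c i - ρ i)
  set b := ⨅ i, (c i + ρ i)
  have hab : a ≤ b := ciSup_le fun i => le_ciInf fun j => hlow i j
  have haq : a ≤ q + ε := ciSup_le fun i => by linarith [(abs_sub_le_iff.1 (hqi i)).2]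
  have hqb : q - ε ≤ b := le_ciInf fun i => by linarith [(abs_sub_le_iff.1 (hqi i)).1]
  refine ⟨max a (min q b), ?_, fun i => ?_⟩
  · rw [Real.dist_eq, abs_sub_le_iff]
    constructor
    · linarith [max_le haq (by linarith [min_le_left q b] : min q b ≤ q + ε)]
    · linarith [(le_min (by linarith : q - ε ≤ q) hqb).trans (le_max_right a _)]
  · rw [Real.dist_eq, abs_sub_le_iff]
    constructor
    · linarith [max_le hab (min_le_right q b), ciInf_le hb i]
    · linarith [le_max_left a (min q b), le_ciSup ha i]

theorem Pi.exists_dist_le_forall_dist_le {κ ι : Type*} [Fintype κ] [Nonempty ι]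
    {c : ι → κ → ℝ} {ρ : ι → ℝ} (hc : ∀ i j, dist (c i) (c j) ≤ ρ i + ρ j) {q : κ → ℝ}
    {ε : ℝ} (hε : 0 ≤ ε) (hq : ∀ i, dist q (c i) ≤ ρ i + ε) :
    ∃ y, dist y q ≤ ε ∧ ∀ i, dist y (c i) ≤ ρ i := by
  choose y hyq hy using fun k => Real.exists_dist_le_forall_dist_le (c := (c · k))
    (fun i j => (dist_le_pi_dist _ _ k).trans (hc i j)) hε
    (fun i => (dist_le_pi_dist _ _ k).trans (hq i))
  refine ⟨y, (dist_pi_le_iff hε).2 hyq, fun i => (dist_pi_le_iff ?_).2 fun k => hy k i⟩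
  linarith [hc i i, dist_self (c i)]

theorem IsClosed.exists_isLeast_enlargement {E : Type*} [MetricSpace E] [ProperSpace E]
    {S : Set E} (hS : IsClosed S) {ι : Type*} [Nonempty ι] (c : ι → E) (ρ : ι → ℝ)
    (hne : ∃ μ, ∃ y ∈ S, ∀ i, dist y (c i) ≤ ρ i + μ) :
    ∃ μ, IsLeast {μ | ∃ y ∈ S, ∀ i, dist y (c i) ≤ ρ i + μ} μ := by
  set M := {μ | ∃ y ∈ S, ∀ i, dist y (c i) ≤ ρ i + μ}
  set A : ℝ → Set E := fun μ => S ∩ ⋂ i, closedBall (c i) (ρ i + μ)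
  obtain ⟨i₀⟩ := ‹Nonempty ι›
  have hbdd : BddBelow M :=
    ⟨-ρ i₀, fun μ ⟨y, _, hy⟩ => by linarith [hy i₀, dist_nonneg (x := y) (y := c i₀)]⟩
  have hA : ∀ μ ∈ M, (A μ).Nonempty := fun μ ⟨y, hyS, hy⟩ =>
    ⟨y, hyS, mem_iInter.2 fun i => mem_closedBall.2 (hy i)⟩
  have hAc : ∀ μ, IsClosed (A μ) := fun μ =>
    hS.inter (isClosed_iInter fun i => isClosed_closedBall)
  have hAmono : Monotone A := fun μ μ' h =>
    inter_subset_inter_right _ (iInter_mono fun i => closedBall_subset_closedBall (by linarith))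
  have : Nonempty M := Set.Nonempty.to_subtype (s := M) hne
  -- the least enlargement is attained by Cantor's intersection theorem
  obtain ⟨y, hy⟩ := IsCompact.nonempty_iInter_of_directed_nonempty_isCompact_isClosed
    (fun μ : M => A μ) (hAmono.comp (Subtype.mono_coe _)).directed_ge (fun μ => hA μ μ.2)
    (fun μ => (isCompact_closedBall (c i₀) (ρ i₀ + μ)).of_isClosed_subset (hAc μ)
      (inter_subset_right.trans (iInter_subset _ i₀)))
    (fun μ => hAc μ)
  simp only [mem_iInter, A, mem_inter_iff, mem_closedBall] at hy
  refine ⟨sInf M, ⟨y, (hy ⟨_, hne.choose_spec⟩).1, fun i => ?_⟩, fun μ hμ => csInf_le hbdd hμ⟩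
  have : dist y (c i) - ρ i ≤ sInf M := le_csInf hne fun μ hμ => by linarith [(hy ⟨μ, hμ⟩).2 i]
  linarith

theorem isHyperconvex_of_locally_retract {κ : Type*} [Fintype κ] {S : Set (κ → ℝ)}
    (hS : IsClosed S)
    (hloc : ∀ q ∈ S, ∃ T, S ⊆ T ∧ IsNonexpansiveRetract T ∧ ∀ᶠ x in 𝓝 q, x ∈ T → x ∈ S) :
    IsHyperconvex S := by
  intro ι _ c ρ hcS hc
  obtain ⟨i₀⟩ := ‹Nonempty ι›
  obtain ⟨μ, ⟨q, hqS, hq⟩, hμ⟩ := hS.exists_isLeast_enlargement c ρ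
    ⟨ρ i₀, c i₀, hcS i₀, fun i => by linarith [hc i i₀, dist_comm (c i₀) (c i)]⟩
  suffices μ ≤ 0 from ⟨q, hqS, fun i => by linarith [hq i]⟩
  by_contra! hμ0
  -- a retraction onto a set agreeing with `S` near the optimal `q` beats the least enlargement
  obtain ⟨T, hST, ⟨r, hr, hrT, hrfix⟩, hTS⟩ := hloc q hqS
  obtain ⟨δ, hδ, hδS⟩ := Metric.eventually_nhds_iff.1 hTS
  set ε := min μ (δ / 2)
  have hε : 0 < ε := lt_min hμ0 (half_pos hδ)
  obtain ⟨z, hzq, hz⟩ := Pi.exists_dist_le_forall_dist_le (ρ := fun i => ρ i + (μ - ε))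
    (fun i j => by linarith [hc i j, min_le_left μ (δ / 2)]) hε.le (fun i => by linarith [hq i])
  have hr' : ∀ x y, dist (r x) (r y) ≤ dist x y := fun x y => by simpa using hr.dist_le_mul x y
  have hrz : r z ∈ S := by
    refine hδS ?_ (hrT z)
    calc dist (r z) q = dist (r z) (r q) := by rw [hrfix q (hST hqS)]
      _ ≤ ε := (hr' z q).trans hzq
      _ < δ := (min_le_right _ _).trans_lt (half_lt_self hδ)
  have : μ ≤ μ - ε := hμ ⟨r z, hrz, fun i => ?_⟩
  · linarith
  · calc dist (r z) (c i) = dist (r z) (r (c i)) := by rw [hrfix _ (hST (hcS i))]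
      _ ≤ ρ i + (μ - ε) := (hr' z (c i)).trans (hz i)

section Homothety

variable {E : Type*} [NormedAddCommGroup E] [NormedSpace ℝ E]

theorem homothety_homothety_inv (p x : E) {t : ℝ} (ht : t ≠ 0) :
    homothety p t (homothety p t⁻¹ x) = x := by
  rw [← homothety_mul_apply, mul_inv_cancel₀ ht, homothety_one, AffineMap.id_apply]

theorem homothety_inv_homothety (p x : E) {t : ℝ} (ht : t ≠ 0) :
    homothety p t⁻¹ (homothety p t x) = x := by
  simpa using homothety_homothety_inv p x (inv_ne_zero ht)

theorem tendsto_homothety_inv_natCast_add_one (p x : E) :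
    Tendsto (fun k : ℕ => homothety p ((k : ℝ) + 1)⁻¹ x) atTop (𝓝 p) := by
  have hcont : Continuous fun t : ℝ => homothety p t x := by
    simp only [homothety_apply]
    fun_prop
  have h0 : Tendsto (fun k : ℕ => ((k : ℝ) + 1)⁻¹) atTop (𝓝 0) := by
    simpa using tendsto_one_div_add_atTop_nhds_zero_nat (𝕜 := ℝ)
  exact (hcont.tendsto' 0 p (by simp)).comp h0

theorem dist_homothety_homothety (p x y : E) (t : ℝ) :
    dist (homothety p t x) (homothety p t y) = |t| * dist x y := by
  simp [homothety_apply, dist_eq_norm, ← smul_sub, norm_smul]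

theorem Convex.homothety_image_subset_homothety_image {P : Set E} (hP : Convex ℝ P) {p : E}
    (hp : p ∈ P) {a b : ℝ} (ha : 0 ≤ a) (hab : a ≤ b) (hb : 0 < b) :
    homothety p a '' P ⊆ homothety p b '' P := by
  rintro _ ⟨y, hy, rfl⟩
  refine ⟨homothety p (a / b) y, ?_, ?_⟩
  · rw [homothety_eq_lineMap]
    exact hP.lineMap_mem hp hy ⟨div_nonneg ha hb.le, div_le_one_of_le₀ hab hb.le⟩
  · rw [← homothety_mul_apply, mul_div_cancel₀ _ hb.ne']

theorem IsNonexpansiveRetract.iUnion_homothety [ProperSpace E] {P : Set E} (hP : Convex ℝ P)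
    {p : E} (hp : p ∈ P) (hT : IsClosed (⋃ m : ℕ, homothety p (m : ℝ) '' P))
    (hr : IsNonexpansiveRetract P) :
    IsNonexpansiveRetract (⋃ m : ℕ, homothety p (m : ℝ) '' P) := by
  obtain ⟨r, hr, hrP, hrfix⟩ := hr
  have hk : ∀ k : ℕ, (0 : ℝ) < k + 1 := fun k => by positivity
  refine isNonexpansiveRetract_of_eventually hT (l := (atTop : Filter ℕ))
    (fun k => homothety p ((k : ℝ) + 1) ∘ r ∘ homothety p ((k : ℝ) + 1)⁻¹)
    (fun x y => Eventually.of_forall fun k => ?_) (fun x => Eventually.of_forall fun k => ?_)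
    (fun x hx => ?_)
  · simp only [Function.comp_apply, dist_homothety_homothety]
    calc |(k : ℝ) + 1| * dist (r _) (r _)
        ≤ |(k : ℝ) + 1| * (|((k : ℝ) + 1)⁻¹| * dist x y) := by
          gcongr
          simpa [dist_homothety_homothety] using
            hr.dist_le_mul (homothety p ((k : ℝ) + 1)⁻¹ x) (homothety p ((k : ℝ) + 1)⁻¹ y)
      _ = dist x y := by
        rw [← mul_assoc, ← abs_mul, mul_inv_cancel₀ (hk k).ne', abs_one, one_mul]
  · exact mem_iUnion.2 ⟨k + 1, by push_cast; exact mem_image_of_mem _ (hrP _)⟩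
  · obtain ⟨m, hm⟩ := mem_iUnion.1 hx
    filter_upwards [eventually_ge_atTop m] with k hkm
    obtain ⟨y, hy, rfl⟩ := hP.homothety_image_subset_homothety_image hp m.cast_nonneg
      (by exact_mod_cast hkm.trans (Nat.le_succ k)) (hk k) hm
    simp only [Function.comp_apply, homothety_inv_homothety p y (hk k).ne', hrfix y hy]

end Homothety

theorem tangentCone_eq_iUnion_homothety {n : ℕ} (P : Set (Fin n → ℝ)) (p : Fin n → ℝ) :
    tangentCone P p = ⋃ m : ℕ, homothety p (m : ℝ) '' P := by
  simp only [tangentCone]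
  congr! 3 with m x
  rw [homothety_apply, vsub_eq_sub, vadd_eq_add, add_comm]

theorem subset_tangentCone {n : ℕ} (P : Set (Fin n → ℝ)) (p : Fin n → ℝ) :
    P ⊆ tangentCone P p :=
  fun x hx => mem_iUnion.2 ⟨1, x, hx, by simp⟩

section Polyhedron

variable {κ ι : Type*} [Fintype κ] (ν : ι → κ → ℝ) (c : ι → ℝ)

def activeCone (p : κ → ℝ) : Set (κ → ℝ) :=
  ⋂ (i) (_ : ν i ⬝ᵥ p = c i), {x | c i ≤ ν i ⬝ᵥ x}

theorem isClosed_halfSpace (v : κ → ℝ) (a : ℝ) : IsClosed {x : κ → ℝ | a ≤ v ⬝ᵥ x} :=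
  isClosed_le continuous_const (continuous_const.dotProduct continuous_id)

theorem isClosed_iInter_halfSpace : IsClosed (⋂ i, {x : κ → ℝ | c i ≤ ν i ⬝ᵥ x}) :=
  isClosed_iInter fun i => isClosed_halfSpace (ν i) (c i)

theorem convex_iInter_halfSpace : Convex ℝ (⋂ i, {x : κ → ℝ | c i ≤ ν i ⬝ᵥ x}) :=
  convex_iInter fun i =>
    convex_halfSpace_ge ⟨dotProduct_add (ν i), fun t x => dotProduct_smul t (ν i) x⟩ (c i)

theorem isClosed_activeCone (p : κ → ℝ) : IsClosed (activeCone ν c p) :=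
  isClosed_iInter fun i => isClosed_iInter fun _ => isClosed_halfSpace (ν i) (c i)

theorem dotProduct_homothety (v p x : κ → ℝ) (t : ℝ) :
    v ⬝ᵥ homothety p t x = v ⬝ᵥ p + t * (v ⬝ᵥ x - v ⬝ᵥ p) := by
  simp only [homothety_apply, vsub_eq_sub, vadd_eq_add, dotProduct_add, dotProduct_smul,
    dotProduct_sub, smul_eq_mul]
  ring

theorem homothety_mem_activeCone {p x : κ → ℝ} (hx : x ∈ activeCone ν c p) {t : ℝ}
    (ht : 0 ≤ t) :
    homothety p t x ∈ activeCone ν c p := by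
  simp only [activeCone, mem_iInter, mem_ofPred_eq] at hx ⊢
  intro i hi
  rw [dotProduct_homothety, hi]
  nlinarith [hx i hi]

theorem iInter_halfSpace_subset_activeCone (p : κ → ℝ) :
    ⋂ i, {x : κ → ℝ | c i ≤ ν i ⬝ᵥ x} ⊆ activeCone ν c p :=
  fun _ hx => mem_iInter₂.2 fun i _ => mem_iInter.1 hx i

variable [Finite ι]

theorem eventually_mem_iInter_halfSpace_of_mem_activeCone {p : κ → ℝ}
    (hp : p ∈ ⋂ i, {x : κ → ℝ | c i ≤ ν i ⬝ᵥ x}) :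
    ∀ᶠ x in 𝓝 p, x ∈ activeCone ν c p → x ∈ ⋂ i, {x : κ → ℝ | c i ≤ ν i ⬝ᵥ x} := by
  have : ∀ i, ∀ᶠ x in 𝓝 p, ν i ⬝ᵥ p = c i ∨ c i ≤ ν i ⬝ᵥ x := by
    intro i
    have hpi : c i ≤ ν i ⬝ᵥ p := mem_iInter.1 hp i
    rcases hpi.eq_or_lt with h | h
    · exact Eventually.of_forall fun _ => Or.inl h.symm
    · exact ((continuous_const.dotProduct continuous_id).continuousAt.eventually
        (lt_mem_nhds h)).mono fun _ hx => Or.inr hx.le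
  filter_upwards [eventually_all.2 this] with x hx hxC
  exact mem_iInter.2 fun i => (hx i).elim (mem_iInter₂.1 hxC i) id

end Polyhedron

theorem tangentCone_iInter_halfSpace {n : ℕ} {ι : Type*} [Finite ι] (ν : ι → Fin n → ℝ)
    (c : ι → ℝ) {p : Fin n → ℝ}
    (hp : p ∈ ⋂ i, {x : Fin n → ℝ | c i ≤ ν i ⬝ᵥ x}) :
    tangentCone (⋂ i, {x | c i ≤ ν i ⬝ᵥ x}) p = activeCone ν c p := by
  rw [tangentCone_eq_iUnion_homothety]
  refine Subset.antisymm (iUnion_subset fun m => ?_) fun x hx => ?_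
  · rintro _ ⟨y, hy, rfl⟩
    exact homothety_mem_activeCone ν c (iInter_halfSpace_subset_activeCone ν c p hy)
      m.cast_nonneg
  · -- pulling `x` towards `p` lands in the polyhedron
    obtain ⟨k, hk⟩ := ((tendsto_homothety_inv_natCast_add_one p x).eventually
      (eventually_mem_iInter_halfSpace_of_mem_activeCone ν c hp)).exists
    refine mem_iUnion.2 ⟨k + 1, _, hk (homothety_mem_activeCone ν c hx (by positivity)), ?_⟩
    push_cast
    exact homothety_homothety_inv p x (Nat.cast_add_one_ne_zero k)

/-- A convex polyhedron `P ⊆ l∞ⁿ` with nonempty interior is injective iff all its tangent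
cones at boundary points are injective. -/
theorem convexPolyhedron_injective_iff_tangentCones {n : ℕ} (P : Set (Fin n → ℝ))
    (hP : IsConvexPolyhedron P) (hint : (interior P).Nonempty) :
    IsInjectiveSubset P ↔ ∀ p ∈ frontier P, IsInjectiveSubset (tangentCone P p) := by
  obtain ⟨m, ν, c, -, rfl⟩ := hP
  have hPc := isClosed_iInter_halfSpace ν c
  simp only [isInjectiveSubset_iff]
  constructor
  · intro hr p hp
    have hpP := hPc.frontier_subset hp
    have hTc := tangentCone_iInter_halfSpace ν c hpP ▸ isClosed_activeCone ν c p
    rw [tangentCone_eq_iUnion_homothety] at hTc ⊢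
    exact hr.iUnion_homothety (convex_iInter_halfSpace ν c) hpP hTc
  · intro hT
    refine (isHyperconvex_of_locally_retract hPc fun q hq => ?_).isNonexpansiveRetract hPc
      (hint.mono interior_subset)
    by_cases hqf : q ∈ frontier (⋂ i, {x | c i ≤ ν i ⬝ᵥ x})
    · refine ⟨_, subset_tangentCone _ q, hT q hqf, ?_⟩
      rw [tangentCone_iInter_halfSpace ν c hq]
      exact eventually_mem_iInter_halfSpace_of_mem_activeCone ν c hq
    · have hqi : q ∈ interior (⋂ i, {x | c i ≤ ν i ⬝ᵥ x}) := by
        rw [← self_sdiff_frontier]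
        exact ⟨hq, hqf⟩
      exact ⟨univ, subset_univ _, ⟨id, LipschitzWith.id, fun _ => trivial, fun _ _ => rfl⟩,
        mem_of_superset (mem_interior_iff_mem_nhds.1 hqi) fun _ hx _ => hx⟩
end

section
/- Consider maps f, g : {1,…,m} → {1,…,n} and real numbers a_i, b_i, c_i ∈ ℝ for i ∈ {1,…,m}, and suppose that the set P := ⋂_{i=1}^m { x ∈ ℝ^n : a_i x_{f(i)} + b_i x_{g(i)} ≥ c_i } is nonempty. Then P, endowed with the l∞-metric, is injective. -/
open Set Metric

set_option linter.unusedSectionVars false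
set_option maxHeartbeats 1000000

namespace TwoVarInj


variable {n : ℕ} {J : Type} [Nonempty J]

def ev (x : J → Fin n → ℝ) (r : J → ℝ) (y : Fin n → ℝ) (X : ℝ) (t : Fin n) :
    Option J → ℝ
  | none => X * y t
  | some k0 => X * x k0 t + |X| * r k0

omit [Nonempty J] in
lemma ev_smul (x : J → Fin n → ℝ) (r : J → ℝ) (y : Fin n → ℝ) {a : ℝ} (ha : 0 ≤ a)
    (X : ℝ) (t : Fin n) (m : Option J) :
    ev x r y (a * X) t m = a * ev x r y X t m := by
  cases m with
  | none => simp only [ev]; ring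
  | some k0 => simp only [ev, abs_mul, abs_of_nonneg ha]; ring

omit [Nonempty J] in
lemma dom (x : J → Fin n → ℝ) (r : J → ℝ) (hr : ∀ j, 0 ≤ r j)
    (hpair : ∀ j k (t : Fin n), |x j t - x k t| ≤ r j + r k)
    (t1 t2 : Fin n) (X1 X2 c : ℝ)
    (hex : ∀ j, X1 * x j t1 + X2 * x j t2 ≥ c) (k1 k2 : J) :
    (X1 * x k1 t1 + |X1| * r k1) + (X2 * x k2 t2 + |X2| * r k2) ≥ c := by
  rcases le_total |X1| |X2| with h | h
  · have hp := abs_le.mp (hpair k1 k2 t1)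
    have h1 : X1 * x k1 t1 ≥ X1 * x k2 t1 - |X1| * (r k1 + r k2) := by
      have habs : |X1 * (x k1 t1 - x k2 t1)| ≤ |X1| * (r k1 + r k2) := by
        rw [abs_mul]
        exact mul_le_mul_of_nonneg_left (abs_le.mpr hp) (abs_nonneg X1)
      have := neg_abs_le (X1 * (x k1 t1 - x k2 t1))
      nlinarith
    have := hex k2
    nlinarith [hr k1, hr k2, abs_nonneg X1, abs_nonneg X2]
  · have hp := abs_le.mp (hpair k2 k1 t2)
    have h1 : X2 * x k2 t2 ≥ X2 * x k1 t2 - |X2| * (r k2 + r k1) := by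
      have habs : |X2 * (x k2 t2 - x k1 t2)| ≤ |X2| * (r k2 + r k1) := by
        rw [abs_mul]
        exact mul_le_mul_of_nonneg_left (abs_le.mpr hp) (abs_nonneg X2)
      have := neg_abs_le (X2 * (x k2 t2 - x k1 t2))
      nlinarith
    have := hex k1
    nlinarith [hr k1, hr k2, abs_nonneg X1, abs_nonneg X2]

/-- Main induction: there is a point `y` satisfying every valid "mixed-mode evaluation"
of every exact two-slot constraint, where live slots (coordinates `< K`) may be
evaluated at `y`. -/
lemma main (x : J → Fin n → ℝ) (r : J → ℝ) (hr : ∀ j, 0 ≤ r j)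
    (hpair : ∀ j k (t : Fin n), |x j t - x k t| ≤ r j + r k) (K : ℕ) :
    ∃ y : Fin n → ℝ,
      ∀ (t1 t2 : Fin n) (X1 X2 c : ℝ),
        (∀ j, X1 * x j t1 + X2 * x j t2 ≥ c) →
        ∀ (m1 m2 : Option J), (m1 = none → (t1 : ℕ) < K) → (m2 = none → (t2 : ℕ) < K) →
        ev x r y X1 t1 m1 + ev x r y X2 t2 m2 ≥ c := by
  induction K with
  | zero =>
    refine ⟨fun _ => 0, ?_⟩
    intro t1 t2 X1 X2 c hex m1 m2 h1 h2
    match m1, m2 with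
    | some k1, some k2 => exact dom x r hr hpair t1 t2 X1 X2 c hex k1 k2
    | none, _ => exact absurd (h1 rfl) (Nat.not_lt_zero _)
    | some _, none => exact absurd (h2 rfl) (Nat.not_lt_zero _)
  | succ K ih =>
    obtain ⟨y', hy'⟩ := ih
    by_cases h : K < n
    swap
    · -- all coordinates are already live at stage K
      refine ⟨y', ?_⟩
      intro t1 t2 X1 X2 c hex m1 m2 h1 h2
      exact hy' t1 t2 X1 X2 c hex m1 m2
        (fun _ => lt_of_lt_of_le t1.isLt (not_lt.mp h))
        (fun _ => lt_of_lt_of_le t2.isLt (not_lt.mp h))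
    obtain ⟨j0⟩ := ‹Nonempty J›
    set v : Fin n := ⟨K, h⟩ with hv
    -- set of lower bounds for the new coordinate value
    set Lo : Set ℝ := { z | ∃ (t2 : Fin n) (X1 X2 c : ℝ) (m2 : Option J),
        (∀ j, X1 * x j v + X2 * x j t2 ≥ c) ∧ (m2 = none → (t2 : ℕ) < K) ∧ 0 < X1 ∧
        z = (c - ev x r y' X2 t2 m2) / X1 } with hLo
    -- cross-consistency: every lower bound is below every upper bound
    have hcross : ∀ z ∈ Lo, ∀ (t2 : Fin n) (X1 X2 c : ℝ) (m2 : Option J),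
        (∀ j, X1 * x j v + X2 * x j t2 ≥ c) → (m2 = none → (t2 : ℕ) < K) → X1 < 0 →
        z ≤ (c - ev x r y' X2 t2 m2) / X1 := by
      rintro z ⟨s2, Z1, Z2, d, m2', hexB, hliveB, hZ1, rfl⟩ t2 X1 X2 c m2 hexA hliveA hX1
      have hnX1 : (0:ℝ) ≤ -X1 := by linarith
      have combo : ∀ j, (Z1 * X2) * x j t2 + ((-X1) * Z2) * x j s2 ≥
          Z1 * c + (-X1) * d := by
        intro j
        nlinarith [mul_le_mul_of_nonneg_left (hexA j) hZ1.le,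
          mul_le_mul_of_nonneg_left (hexB j) hnX1]
      have HI := hy' t2 s2 (Z1 * X2) ((-X1) * Z2) (Z1 * c + (-X1) * d) combo m2 m2'
        hliveA hliveB
      rw [ev_smul x r y' hZ1.le, ev_smul x r y' hnX1] at HI
      set E := ev x r y' X2 t2 m2
      set F := ev x r y' Z2 s2 m2'
      have key : Z1 * (c - E) ≤ X1 * (d - F) := by nlinarith
      rw [le_div_iff_of_neg hX1, div_mul_eq_mul_div, le_div_iff₀ hZ1]
      nlinarith [key]
    have hLoNe : Lo.Nonempty := by
      refine ⟨(0 - ev x r y' (-1) v (some j0)) / 1, v, 1, -1, 0, some j0, ?_, ?_, one_pos, rfl⟩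
      · intro j; simp
      · exact fun hcon => absurd hcon (Option.some_ne_none _)
    have hbdd : BddAbove Lo := by
      refine ⟨(0 - ev x r y' 1 v (some j0)) / (-1), ?_⟩
      intro z hz
      exact hcross z hz v (-1) 1 0 (some j0) (by intro j; simp)
        (fun hcon => absurd hcon (Option.some_ne_none _)) (by norm_num)
    set w : ℝ := sSup Lo with hw
    -- the one-live-slot-at-v lemma
    have Hone : ∀ (t2 : Fin n) (X1 X2 c : ℝ) (m2 : Option J),
        (∀ j, X1 * x j v + X2 * x j t2 ≥ c) → (m2 = none → (t2 : ℕ) < K) →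
        X1 * w + ev x r y' X2 t2 m2 ≥ c := by
      intro t2 X1 X2 c m2 hexA hlive
      rcases lt_trichotomy X1 0 with hX1 | hX1 | hX1
      · have hble : w ≤ (c - ev x r y' X2 t2 m2) / X1 :=
          csSup_le hLoNe (fun z hz => hcross z hz t2 X1 X2 c m2 hexA hlive hX1)
        have h2 := mul_le_mul_of_nonpos_left hble (le_of_lt hX1)
        have h3 : X1 * ((c - ev x r y' X2 t2 m2) / X1) = c - ev x r y' X2 t2 m2 := by
          rw [mul_div_assoc']; exact mul_div_cancel_left₀ _ (ne_of_lt hX1)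
        linarith
      · subst hX1
        have HI := hy' v t2 0 X2 c (by intro j; have := hexA j; linarith) (some j0) m2
          (fun hcon => absurd hcon (Option.some_ne_none _)) hlive
        simp only [ev, abs_zero, zero_mul, zero_add] at HI ⊢
        linarith
      · have hz : (c - ev x r y' X2 t2 m2) / X1 ∈ Lo :=
          ⟨t2, X1, X2, c, m2, hexA, hlive, hX1, rfl⟩
        have hble := le_csSup hbdd hz
        have h2 := mul_le_mul_of_nonneg_left hble (le_of_lt hX1)
        have h3 : X1 * ((c - ev x r y' X2 t2 m2) / X1) = c - ev x r y' X2 t2 m2 := by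
          rw [mul_div_assoc']; exact mul_div_cancel_left₀ _ (ne_of_gt hX1)
        linarith
    refine ⟨Function.update y' v w, ?_⟩
    intro t1 t2 X1 X2 c hex m1 m2 h1 h2
    have hupv : Function.update y' v w v = w := Function.update_self v w y'
    have hupn : ∀ t : Fin n, t ≠ v → Function.update y' v w t = y' t :=
      fun t ht => Function.update_of_ne ht w y'
    match m1, m2 with
    | some k1, some k2 =>
      exact dom x r hr hpair t1 t2 X1 X2 c hex k1 k2
    | none, some k2 =>
      have ht1 : (t1 : ℕ) < K + 1 := h1 rfl
      by_cases he : (t1 : ℕ) = K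
      · obtain rfl : t1 = v := Fin.ext he
        have := Hone t2 X1 X2 c (some k2) hex (fun hcon => absurd hcon (Option.some_ne_none _))
        simp only [ev] at this ⊢
        rw [hupv]
        linarith
      · have ht1' : (t1 : ℕ) < K := by omega
        have := hy' t1 t2 X1 X2 c hex none (some k2) (fun _ => ht1')
          (fun hcon => absurd hcon (Option.some_ne_none _))
        have hne : t1 ≠ v := by
          intro hcon; apply he; rw [hcon]
        simp only [ev] at this ⊢
        rw [hupn t1 hne]
        linarith
    | some k1, none =>
      have ht2 : (t2 : ℕ) < K + 1 := h2 rfl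
      by_cases he : (t2 : ℕ) = K
      · obtain rfl : t2 = v := Fin.ext he
        have hex' : ∀ j, X2 * x j v + X1 * x j t1 ≥ c := by
          intro j; have := hex j; linarith
        have := Hone t1 X2 X1 c (some k1) hex' (fun hcon => absurd hcon (Option.some_ne_none _))
        simp only [ev] at this ⊢
        rw [hupv]
        linarith
      · have ht2' : (t2 : ℕ) < K := by omega
        have := hy' t1 t2 X1 X2 c hex (some k1) none
          (fun hcon => absurd hcon (Option.some_ne_none _)) (fun _ => ht2')
        have hne : t2 ≠ v := by
          intro hcon; apply he; rw [hcon]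
        simp only [ev] at this ⊢
        rw [hupn t2 hne]
        linarith
    | none, none =>
      have ht1 : (t1 : ℕ) < K + 1 := h1 rfl
      have ht2 : (t2 : ℕ) < K + 1 := h2 rfl
      by_cases he1 : (t1 : ℕ) = K <;> by_cases he2 : (t2 : ℕ) = K
      · obtain rfl : t1 = v := Fin.ext he1
        obtain rfl : t2 = v := Fin.ext he2
        have hex' : ∀ j, (X1 + X2) * x j v + 0 * x j v ≥ c := by
          intro j; have := hex j; nlinarith
        have := Hone v (X1 + X2) 0 c (some j0) hex'
          (fun hcon => absurd hcon (Option.some_ne_none _))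
        simp only [ev, abs_zero, zero_mul, zero_add, add_zero] at this ⊢
        rw [hupv]
        linarith
      · obtain rfl : t1 = v := Fin.ext he1
        have ht2' : (t2 : ℕ) < K := by omega
        have := Hone t2 X1 X2 c none hex (fun _ => ht2')
        have hne : t2 ≠ v := by intro hcon; apply he2; rw [hcon]
        simp only [ev] at this ⊢
        rw [hupv, hupn t2 hne]
        linarith
      · obtain rfl : t2 = v := Fin.ext he2
        have ht1' : (t1 : ℕ) < K := by omega
        have hex' : ∀ j, X2 * x j v + X1 * x j t1 ≥ c := by
          intro j; have := hex j; linarith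
        have := Hone t1 X2 X1 c none hex' (fun _ => ht1')
        have hne : t1 ≠ v := by intro hcon; apply he1; rw [hcon]
        simp only [ev] at this ⊢
        rw [hupv, hupn t1 hne]
        linarith
      · have ht1' : (t1 : ℕ) < K := by omega
        have ht2' : (t2 : ℕ) < K := by omega
        have := hy' t1 t2 X1 X2 c hex none none (fun _ => ht1') (fun _ => ht2')
        have hne1 : t1 ≠ v := by intro hcon; apply he1; rw [hcon]
        have hne2 : t2 ≠ v := by intro hcon; apply he2; rw [hcon]
        simp only [ev] at this ⊢
        rw [hupn t1 hne1, hupn t2 hne2]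
        linarith



variable {n m : ℕ}

/-- Ball intersection property: any family of balls centered in `P` satisfying the
pairwise distance condition meets `P`. -/
lemma ball_inter (f g : Fin m → Fin n) (a b c : Fin m → ℝ)
    {J : Type} [Nonempty J] (x : J → Fin n → ℝ) (r : J → ℝ)
    (hr : ∀ j, 0 ≤ r j)
    (hxP : ∀ j i, c i ≤ a i * x j (f i) + b i * x j (g i))
    (hd : ∀ j k, dist (x j) (x k) ≤ r j + r k) :
    ∃ y : Fin n → ℝ, (∀ i, c i ≤ a i * y (f i) + b i * y (g i)) ∧
      ∀ j, dist y (x j) ≤ r j := by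
  have hpair : ∀ j k (t : Fin n), |x j t - x k t| ≤ r j + r k := by
    intro j k t
    have h1 : dist (x j t) (x k t) ≤ dist (x j) (x k) := dist_le_pi_dist (x j) (x k) t
    rw [Real.dist_eq] at h1
    exact h1.trans (hd j k)
  obtain ⟨y, hy⟩ := main x r hr hpair n
  refine ⟨y, ?_, ?_⟩
  · intro i
    have := hy (f i) (g i) (a i) (b i) (c i) (fun j => hxP j i) none none
      (fun _ => (f i).isLt) (fun _ => (g i).isLt)
    simp only [ev] at this
    linarith
  · intro j
    rw [dist_pi_le_iff (hr j)]
    intro t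
    rw [Real.dist_eq, abs_sub_le_iff]
    constructor
    · have := hy t t (-1) 1 0 (by intro j'; simp) none (some j)
        (fun _ => t.isLt) (fun hcon => absurd hcon (Option.some_ne_none _))
      simp only [ev] at this
      have habs : |(1:ℝ)| = 1 := abs_one
      rw [habs] at this
      linarith
    · have := hy t t 1 (-1) 0 (by intro j'; simp) none (some j)
        (fun _ => t.isLt) (fun hcon => absurd hcon (Option.some_ne_none _))
      simp only [ev] at this
      have habs : |(-1:ℝ)| = 1 := by norm_num
      rw [habs] at this
      linarith

/-- Existence of a 1-Lipschitz retraction of `l∞ⁿ` onto `P`. -/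
lemma exists_retraction (f g : Fin m → Fin n) (a b c : Fin m → ℝ)
    (P : Set (Fin n → ℝ))
    (hP : P = ⋂ i, {x | c i ≤ a i * x (f i) + b i * x (g i)})
    (hne : P.Nonempty) :
    ∃ ρ : (Fin n → ℝ) → (Fin n → ℝ), (∀ z, ρ z ∈ P) ∧ (∀ p ∈ P, ρ p = p) ∧
      ∀ z z', dist (ρ z) (ρ z') ≤ dist z z' := by
  have hmem : ∀ y : Fin n → ℝ, y ∈ P ↔ ∀ i, c i ≤ a i * y (f i) + b i * y (g i) := by
    intro y
    rw [hP]
    simp [Set.mem_iInter]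
  -- Zorn's lemma on partial 1-Lipschitz graphs extending the identity on P
  set S : Set (Set ((Fin n → ℝ) × (Fin n → ℝ))) :=
    {G | (∀ q ∈ G, q.2 ∈ P) ∧ (∀ q ∈ G, ∀ q' ∈ G, dist q.2 q'.2 ≤ dist q.1 q'.1) ∧
      ∀ p ∈ P, (p, p) ∈ G} with hS
  have hG0 : {q : (Fin n → ℝ) × (Fin n → ℝ) | q.1 ∈ P ∧ q.2 = q.1} ∈ S := by
    refine ⟨?_, ?_, ?_⟩
    · rintro q ⟨h1, h2⟩; rw [h2]; exact h1
    · rintro q ⟨h1, h2⟩ q' ⟨h1', h2'⟩; rw [h2, h2']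
    · intro p hp; exact ⟨hp, rfl⟩
  have hchains : ∀ ch ⊆ S, IsChain (· ⊆ ·) ch → ch.Nonempty →
      ∃ ub ∈ S, ∀ s ∈ ch, s ⊆ ub := by
    intro ch hch hchain hchne
    refine ⟨⋃₀ ch, ⟨?_, ?_, ?_⟩, fun s hs => subset_sUnion_of_mem hs⟩
    · rintro q ⟨t, ht, hq⟩
      exact (hch ht).1 q hq
    · rintro q ⟨t, ht, hq⟩ q' ⟨t', ht', hq'⟩
      rcases hchain.total ht ht' with hsub | hsub
      · exact (hch ht').2.1 q (hsub hq) q' hq'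
      · exact (hch ht).2.1 q hq q' (hsub hq')
    · obtain ⟨t, ht⟩ := hchne
      intro p hp
      exact ⟨t, ht, (hch ht).2.2 p hp⟩
  obtain ⟨G, -, hGS, hGmax⟩ := zorn_subset_nonempty S hchains _ hG0
  obtain ⟨hG1, hG2, hG3⟩ := hGS
  -- maximal graph is total
  have htot : ∀ z : Fin n → ℝ, ∃ y, (z, y) ∈ G := by
    intro z
    by_contra hno
    push_neg at hno
    obtain ⟨p0, hp0⟩ := hne
    haveI : Nonempty G := ⟨⟨(p0, p0), hG3 p0 hp0⟩⟩
    obtain ⟨y0, hy0P, hy0d⟩ := ball_inter f g a b c (fun q : G => q.1.2)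
      (fun q : G => dist q.1.1 z) (fun q => dist_nonneg)
      (fun q i => ((hmem q.1.2).mp (hG1 q.1 q.2)) i)
      (fun q q' => le_trans (hG2 q.1 q.2 q'.1 q'.2)
        (by calc dist q.1.1 q'.1.1 ≤ dist q.1.1 z + dist z q'.1.1 := dist_triangle _ _ _
              _ = dist q.1.1 z + dist q'.1.1 z := by rw [dist_comm z]))
    have hG' : insert (z, y0) G ∈ S := by
      refine ⟨?_, ?_, ?_⟩
      · rintro q (rfl | hq)
        · exact (hmem y0).mpr hy0P
        · exact hG1 q hq
      · rintro q (rfl | hq) q' (rfl | hq')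
        · simp
        · calc dist (z, y0).2 q'.2 = dist y0 q'.2 := rfl
            _ ≤ dist q'.1 z := hy0d ⟨q', hq'⟩
            _ = dist (z, y0).1 q'.1 := dist_comm _ _
        · calc dist q.2 (z, y0).2 = dist y0 q.2 := dist_comm _ _
            _ ≤ dist q.1 z := hy0d ⟨q, hq⟩
            _ = dist q.1 (z, y0).1 := rfl
        · exact hG2 q hq q' hq'
      · intro p hp; exact Set.mem_insert_of_mem _ (hG3 p hp)
    have hsub := hGmax hG' (Set.subset_insert _ _)
    exact hno y0 (hsub (Set.mem_insert _ _))
  choose ρ hρ using htot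
  refine ⟨ρ, fun z => hG1 _ (hρ z), ?_, fun z z' => hG2 _ (hρ z) _ (hρ z')⟩
  intro p hp
  have h1 := hG2 _ (hρ p) _ (hG3 p hp)
  simp only [dist_self] at h1
  have h2 : dist (ρ p) p ≤ 0 := h1
  have := dist_le_zero.mp h2
  exact this


end TwoVarInj

/-- If the solution set of a linear system of inequalities with at most two variables per
inequality is nonempty, then it is injective with the `l∞`-metric. -/
theorem twoVariablePerInequality_injective {n m : ℕ} (f g : Fin m → Fin n)
    (a b c : Fin m → ℝ) (P : Set (Fin n → ℝ))
    (hP : P = ⋂ i, {x | c i ≤ a i * x (f i) + b i * x (g i)})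
    (hne : P.Nonempty) :
    IsInjectiveSubset P := by
  unfold IsInjectiveSubset IsInjectiveMetricSpace
  intro A B _ _ i f1 hi hf1
  obtain ⟨ρ, hρP, hρid, hρlip⟩ := TwoVarInj.exists_retraction f g a b c P hP hne
  classical
  set φ : B → (Fin n → ℝ) :=
    fun bb => if h : ∃ a0, i a0 = bb then (f1 h.choose : Fin n → ℝ) else 0 with hφdef
  have hφ : ∀ a0 : A, φ (i a0) = (f1 a0 : Fin n → ℝ) := by
    intro a0
    have hex : ∃ a1, i a1 = i a0 := ⟨a0, rfl⟩
    simp only [hφdef, dif_pos hex]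
    have : hex.choose = a0 := hi.injective hex.choose_spec
    rw [this]
  have hLipOn : LipschitzOnWith 1 φ (Set.range i) := by
    rw [lipschitzOnWith_iff_dist_le_mul]
    rintro bb ⟨a1, rfl⟩ bb' ⟨a2, rfl⟩
    rw [hφ a1, hφ a2]
    have h1 : dist (f1 a1) (f1 a2) ≤ 1 * dist a1 a2 := by
      have := hf1.dist_le_mul a1 a2
      simpa using this
    have h2 : dist (f1 a1 : Fin n → ℝ) (f1 a2 : Fin n → ℝ) = dist (f1 a1) (f1 a2) :=
      (Subtype.dist_eq _ _).symm
    rw [h2, hi.dist_eq]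
    simpa using h1
  obtain ⟨Φ, hΦlip, hΦeq⟩ := hLipOn.extend_pi
  refine ⟨fun bb => ⟨ρ (Φ bb), hρP _⟩, ?_, ?_⟩
  · rw [lipschitzWith_iff_dist_le_mul]
    intro b1 b2
    rw [Subtype.dist_eq]
    calc dist (ρ (Φ b1)) (ρ (Φ b2)) ≤ dist (Φ b1) (Φ b2) := hρlip _ _
      _ ≤ 1 * dist b1 b2 := by simpa using hΦlip.dist_le_mul b1 b2
  · intro a0
    have h1 : Φ (i a0) = φ (i a0) := (hΦeq ⟨a0, rfl⟩).symm
    apply Subtype.ext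
    show ρ (Φ (i a0)) = (f1 a0 : Fin n → ℝ)
    rw [h1, hφ a0]
    exact hρid _ (f1 a0).2
end

section
/- Let X ⊂ l∞^n be a nonempty linear subspace and k := dim(X). Then X is injective if and only if there is a subset J ⊂ {1,…,n} with |J| = k such that for every i ∈ {1,…,n} ∖ J there exist real numbers c(i,j) for j ∈ J with Σ_{j∈J} |c(i,j)| ≤ 1 and X = { x ∈ ℝ^n : x_i = Σ_{j∈J} c(i,j) x_j for all i ∈ {1,…,n} ∖ J }. -/
open Set Metric

/-!
Backward direction: the coordinate map `x ↦ (x_j)_{j ∈ J}, (∑_j c i j x_j)_{i ∉ J}` is a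
`1`-Lipschitz retraction of `ℓ∞ⁿ` onto `X` because `∑_j |c i j| ≤ 1`, and a `1`-Lipschitz retract
of `ℓ∞ⁿ` is injective since `ℓ∞ⁿ` is (McShane extension in each coordinate).

Forward direction: choose `J` minimal with `‖x‖ = max_{j ∈ J} |x j|` on `X`. Restriction to `J`
embeds `X` isometrically into `ℓ∞(J)`, so injectivity of `X` gives a `1`-Lipschitz retraction of
`ℓ∞(J)` onto the image `Y`. Minimality provides for each `j ∈ J` a vector of `Y` with `j`-th
coordinate `1` and all others in `(-1, 1)`. After arbitrary sign changes these are pairwise at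
distance `< 2`, so the `ℓ∞`-balls of some radius `< 1` around them meet; retracting a common point
yields a vector of `Y` in any prescribed open orthant. Hence no nonzero functional vanishes on
`Y`, i.e. `Y = ℓ∞(J)`, and `X` is the graph of a linear map of the `J`-coordinates; testing it on
the preimage of a sign vector bounds `∑_j |c i j|` by `1`.
-/

open Finset

variable {ι : Type}

abbrev restrictₗ (J : Finset ι) : (ι → ℝ) →ₗ[ℝ] (J → ℝ) :=
  LinearMap.funLeft ℝ ℝ Subtype.val

theorem abs_le_norm_restrictₗ {J : Finset ι} {j : ι} (hj : j ∈ J) (x : ι → ℝ) :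
    |x j| ≤ ‖restrictₗ J x‖ :=
  norm_le_pi_norm (restrictₗ J x) ⟨j, hj⟩

theorem LinearEquiv.coe_symm_apply_eq_sum [DecidableEq ι] {X : Submodule ℝ (ι → ℝ)}
    {J : Finset ι} (e : X ≃ₗ[ℝ] (J → ℝ)) (y : J → ℝ) (i : ι) :
    (e.symm y : ι → ℝ) i = ∑ k : J, (e.symm (Pi.single k 1) : ι → ℝ) i * y k := by
  conv_lhs => rw [pi_eq_sum_univ' y, map_sum]
  simp only [map_smul, Submodule.coe_sum, Submodule.coe_smul, Finset.sum_apply, Pi.smul_apply,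
    smul_eq_mul, mul_comm]

variable [Fintype ι]

theorem norm_restrictₗ_le (J : Finset ι) (x : ι → ℝ) : ‖restrictₗ J x‖ ≤ ‖x‖ :=
  (pi_norm_le_iff_of_nonneg (norm_nonneg x)).2 fun j => norm_le_pi_norm x j

theorem exists_forall_norm_sub_le {κ : Type} [Fintype κ] [Nonempty κ] (y : κ → ι → ℝ) {R : ℝ}
    (hy : ∀ j k, ‖y j - y k‖ ≤ 2 * R) : ∃ w : ι → ℝ, ∀ j, ‖w - y j‖ ≤ R := by
  obtain ⟨j₀⟩ := ‹Nonempty κ›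
  have hR : 0 ≤ R := by linarith [hy j₀ j₀, norm_nonneg (y j₀ - y j₀)]
  refine ⟨fun m => univ.sup' univ_nonempty (fun k => y k m) - R, fun j => ?_⟩
  refine (pi_norm_le_iff_of_nonneg hR).2 fun m => ?_
  have hle : y j m ≤ univ.sup' univ_nonempty (fun k => y k m) :=
    le_sup' (fun k => y k m) (mem_univ j)
  have hge : univ.sup' univ_nonempty (fun k => y k m) ≤ y j m + 2 * R :=
    sup'_le _ _ fun k _ => by
      have := (abs_le.1 (norm_le_pi_norm (y k - y j) m |>.trans (hy k j))).2
      simp only [Pi.sub_apply] at this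
      linarith
  rw [Real.norm_eq_abs, abs_le]
  constructor <;> simp only [Pi.sub_apply] <;> linarith

theorem isInjectiveMetricSpace_of_lipschitzWith_retraction {S : Set (ι → ℝ)} (r : (ι → ℝ) → S)
    (hr : LipschitzWith 1 r) (hrS : ∀ x : S, r x = x) : IsInjectiveMetricSpace S := by
  intro A B _ _ i f hi hf
  set F : B → ι → ℝ := Function.extend i (fun a => (f a : ι → ℝ)) 0
  have hFi : ∀ a, F (i a) = f a := hi.injective.extend_apply _ _
  have hF : LipschitzOnWith 1 F (range i) := by
    refine LipschitzOnWith.of_dist_le_mul ?_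
    rintro _ ⟨a, rfl⟩ _ ⟨a', rfl⟩
    rw [hFi, hFi, hi.dist_eq, ← Subtype.dist_eq]
    exact hf.dist_le_mul a a'
  obtain ⟨G, hG, hGF⟩ := hF.extend_pi
  refine ⟨r ∘ G, by simpa using hr.comp hG, fun a => ?_⟩
  rw [Function.comp_apply, ← hGF (mem_range_self a), hFi, hrS]

theorem abs_sum_mul_le_sum_abs_mul_norm (J : Finset ι) (c x : ι → ℝ) :
    |∑ j ∈ J, c j * x j| ≤ (∑ j ∈ J, |c j|) * ‖x‖ := by
  calc |∑ j ∈ J, c j * x j| ≤ ∑ j ∈ J, |c j| * |x j| := by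
        simpa only [abs_mul] using abs_sum_le_sum_abs (fun j => c j * x j) J
    _ ≤ ∑ j ∈ J, |c j| * ‖x‖ :=
        sum_le_sum fun j _ => mul_le_mul_of_nonneg_left (norm_le_pi_norm x j) (abs_nonneg _)
    _ = (∑ j ∈ J, |c j|) * ‖x‖ := (sum_mul _ _ _).symm

theorem isInjectiveMetricSpace_graph [DecidableEq ι] (J : Finset ι) (c : ι → ι → ℝ)
    (hc : ∀ i ∉ J, ∑ j ∈ J, |c i j| ≤ 1) :
    IsInjectiveMetricSpace {x : ι → ℝ | ∀ i ∉ J, x i = ∑ j ∈ J, c i j * x j} := by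
  set ρ : (ι → ℝ) → ι → ℝ := fun x i => if i ∈ J then x i else ∑ j ∈ J, c i j * x j
  have hρJ : ∀ x, ∀ j ∈ J, ρ x j = x j := fun x j hj => if_pos hj
  have hρ : ∀ x, ∀ i ∉ J, ρ x i = ∑ j ∈ J, c i j * x j := fun x i hi => if_neg hi
  have hρmem : ∀ x, ∀ i ∉ J, ρ x i = ∑ j ∈ J, c i j * ρ x j := fun x i hi => by
    rw [hρ x i hi]
    exact sum_congr rfl fun j hj => by rw [hρJ x j hj]
  refine isInjectiveMetricSpace_of_lipschitzWith_retraction (fun x => ⟨ρ x, hρmem x⟩) ?_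
    fun x => Subtype.ext (funext fun i => ?_)
  · refine LipschitzWith.of_dist_le_mul fun x y => ?_
    rw [NNReal.coe_one, one_mul, Subtype.dist_eq, dist_pi_le_iff dist_nonneg]
    intro i
    change dist (ρ x i) (ρ y i) ≤ dist x y
    by_cases hi : i ∈ J
    · rw [hρJ x i hi, hρJ y i hi]
      exact dist_le_pi_dist x y i
    · rw [hρ x i hi, hρ y i hi, Real.dist_eq, ← sum_sub_distrib, dist_eq_norm]
      simp_rw [← mul_sub]
      exact (abs_sum_mul_le_sum_abs_mul_norm J (c i) (x - y)).trans
        (mul_le_of_le_one_left (norm_nonneg _) (hc i hi))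
  · by_cases hi : i ∈ J
    · exact hρJ x i hi
    · exact (hρ x i hi).trans (x.2 i hi).symm

theorem exists_forall_norm_sub_lt_one (u : ι → ι → ℝ) (hdiag : ∀ i, |u i i| ≤ 1)
    (hoff : ∀ i j, j ≠ i → |u i j| < 1) : ∃ w : ι → ℝ, ∀ i, ‖w - u i‖ < 1 := by
  classical
  rcases isEmpty_or_nonempty ι with hι | hι
  · exact ⟨0, fun i => isEmptyElim i⟩
  obtain ⟨p, hp⟩ := Finite.exists_max fun p : ι × ι => if p.2 = p.1 then 0 else |u p.1 p.2|
  set δ := if p.2 = p.1 then 0 else |u p.1 p.2|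
  have hδ0 : 0 ≤ δ := by simpa using hp (p.1, p.1)
  have hδ1 : δ < 1 := by
    by_cases h : p.2 = p.1 <;> simp only [δ, h, if_true, if_false]
    exacts [one_pos, hoff _ _ h]
  have huδ : ∀ i j, j ≠ i → |u i j| ≤ δ := fun i j hji => by simpa [hji] using hp (i, j)
  have hu1 : ∀ i j, |u i j| ≤ 1 := fun i j => by
    rcases eq_or_ne j i with rfl | hji
    exacts [hdiag j, (huδ i j hji).trans hδ1.le]
  obtain ⟨w, hw⟩ := exists_forall_norm_sub_le u (R := (1 + δ) / 2) fun i k => by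
    rcases eq_or_ne i k with rfl | hik
    · simp only [sub_self, norm_zero]
      linarith
    refine (pi_norm_le_iff_of_nonneg (by linarith)).2 fun m => ?_
    have hsum : |u i m| + |u k m| ≤ 1 + δ := by
      rcases eq_or_ne m i with rfl | hmi
      · linarith [hu1 m m, huδ k _ hik]
      · linarith [huδ i m hmi, hu1 k m]
    exact (abs_sub _ _).trans (by linarith)
  exact ⟨w, fun i => (hw i).trans_lt (by linarith)⟩

theorem Submodule.exists_mem_forall_pos_mul (Y : Submodule ℝ (ι → ℝ)) (r : (ι → ℝ) → Y)
    (hr : LipschitzWith 1 r) (hrY : ∀ y : Y, r y = y)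
    (hdom : ∀ i, ∃ v ∈ Y, v i = 1 ∧ ∀ j ≠ i, |v j| < 1) (σ : ι → ℝ) (hσ : ∀ i, |σ i| = 1) :
    ∃ z ∈ Y, ∀ i, 0 < σ i * z i := by
  choose v hvY hvi hvj using hdom
  obtain ⟨w, hw⟩ := exists_forall_norm_sub_lt_one (fun i => σ i • v i)
    (fun i => by simp [hσ, hvi]) fun i j hji => by
      simpa [abs_mul, hσ] using hvj i j hji
  refine ⟨r w, (r w).2, fun i => ?_⟩
  have hfix : r (σ i • v i) = ⟨σ i • v i, Y.smul_mem _ (hvY i)⟩ := hrY ⟨_, _⟩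
  have hzi : |(r w : ι → ℝ) i - σ i| < 1 := by
    calc |(r w : ι → ℝ) i - σ i| = ‖((r w : ι → ℝ) - σ i • v i) i‖ := by simp [hvi]
      _ ≤ ‖(r w : ι → ℝ) - σ i • v i‖ := norm_le_pi_norm _ i
      _ ≤ ‖w - σ i • v i‖ := by
        have := hr.dist_le_mul w (σ i • v i)
        rwa [hfix, NNReal.coe_one, one_mul, Subtype.dist_eq, dist_eq_norm, dist_eq_norm] at this
      _ < 1 := hw i
  have hσ2 : σ i * σ i = 1 := by rw [← abs_mul_abs_self, hσ i, one_mul]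
  have : |σ i * (r w : ι → ℝ) i - 1| < 1 := by
    rwa [show σ i * (r w : ι → ℝ) i - 1 = σ i * ((r w : ι → ℝ) i - σ i) by
      linear_combination hσ2, abs_mul, hσ i, one_mul]
  linarith [(abs_lt.1 this).1]

theorem Submodule.eq_top_of_lipschitzWith_retraction (Y : Submodule ℝ (ι → ℝ))
    (r : (ι → ℝ) → Y) (hr : LipschitzWith 1 r) (hrY : ∀ y : Y, r y = y)
    (hdom : ∀ i, ∃ v ∈ Y, v i = 1 ∧ ∀ j ≠ i, |v j| < 1) : Y = ⊤ := by
  classical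
  by_contra hY
  obtain ⟨f, hf0, hYf⟩ := Y.exists_le_ker_of_lt_top (lt_top_iff_ne_top.2 hY)
  set a : ι → ℝ := fun i => f fun j => if i = j then 1 else 0
  have hf : ∀ x, f x = ∑ i, a i * x i := fun x => by
    rw [f.pi_apply_eq_sum_univ]
    exact sum_congr rfl fun i _ => mul_comm _ _
  obtain ⟨i₀, hi₀⟩ : ∃ i, a i ≠ 0 := by
    by_contra! h
    exact hf0 (LinearMap.ext fun x => by simp [hf, h])
  set σ : ι → ℝ := fun i => if 0 ≤ a i then 1 else -1
  have hσ : ∀ i, |σ i| = 1 := fun i => by by_cases h : 0 ≤ a i <;> simp [σ, h]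
  have haσ : ∀ i, a i = |a i| * σ i := fun i => by
    by_cases h : 0 ≤ a i <;> simp [σ, h, abs_of_nonneg, abs_of_neg, not_le.1]
  obtain ⟨z, hzY, hz⟩ := Y.exists_mem_forall_pos_mul r hr hrY hdom σ hσ
  have hterm : ∀ i, a i * z i = |a i| * (σ i * z i) := fun i => by
    linear_combination z i * haσ i
  have : 0 < f z := by
    rw [hf]
    refine sum_pos' (fun i _ => ?_) ⟨i₀, mem_univ _, ?_⟩ <;> rw [hterm]
    · exact mul_nonneg (abs_nonneg _) (hz i).le
    · exact mul_pos (abs_pos.2 hi₀) (hz i₀)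
  exact this.ne' (hYf hzY)

theorem Submodule.exists_minimal_norming_finset [DecidableEq ι] (X : Submodule ℝ (ι → ℝ)) :
    ∃ J : Finset ι, (∀ x ∈ X, ‖x‖ ≤ ‖restrictₗ J x‖) ∧
      ∀ i ∈ J, ∃ x ∈ X, x i = 1 ∧ ∀ j ∈ J, j ≠ i → |x j| < 1 := by
  obtain ⟨J, hJ⟩ := exists_minimal_of_wellFoundedLT
    (fun J : Finset ι => ∀ x ∈ X, ‖x‖ ≤ ‖restrictₗ J x‖)
    ⟨univ, fun x _ => (pi_norm_le_iff_of_nonneg (norm_nonneg _)).2 fun m =>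
      abs_le_norm_restrictₗ (mem_univ m) x⟩
  refine ⟨J, hJ.1, fun i hi => ?_⟩
  obtain ⟨x, hxX, hx⟩ : ∃ x ∈ X, ‖restrictₗ (J.erase i) x‖ < ‖x‖ := by
    by_contra! h
    exact (erase_ssubset hi).not_ge (hJ.2 h (erase_subset i J))
  have hJx : ‖restrictₗ J x‖ ≤ max |x i| ‖restrictₗ (J.erase i) x‖ :=
    (pi_norm_le_iff_of_nonneg ((abs_nonneg _).trans (le_max_left _ _))).2 fun ⟨k, hk⟩ => by
      rcases eq_or_ne k i with rfl | hki
      · exact le_max_left _ _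
      · exact (abs_le_norm_restrictₗ (mem_erase.2 ⟨hki, hk⟩) x).trans (le_max_right _ _)
  have hxi : ‖x‖ ≤ |x i| := by
    rcases le_max_iff.1 ((hJ.1 x hxX).trans hJx) with h | h
    exacts [h, absurd h hx.not_ge]
  have hxi0 : x i ≠ 0 := abs_pos.1 ((norm_nonneg _).trans_lt hx |>.trans_le hxi)
  refine ⟨(x i)⁻¹ • x, X.smul_mem _ hxX, inv_mul_cancel₀ hxi0, fun j hj hji => ?_⟩
  rw [Pi.smul_apply, smul_eq_mul, abs_mul, abs_inv, inv_mul_lt_one₀ (abs_pos.2 hxi0)]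
  exact (abs_le_norm_restrictₗ (mem_erase.2 ⟨hji, hj⟩) x).trans_lt (hx.trans_le hxi)

theorem bijective_restrictₗ_of_isInjectiveMetricSpace (X : Submodule ℝ (ι → ℝ))
    (J : Finset ι) (hX : IsInjectiveMetricSpace X) (hnorm : ∀ x ∈ X, ‖x‖ ≤ ‖restrictₗ J x‖)
    (hdom : ∀ i ∈ J, ∃ x ∈ X, x i = 1 ∧ ∀ j ∈ J, j ≠ i → |x j| < 1) :
    Function.Bijective (restrictₗ J ∘ₗ X.subtype) := by
  set R := restrictₗ J ∘ₗ X.subtype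
  have hR : Isometry R := AddMonoidHomClass.isometry_of_norm R fun x =>
    le_antisymm (norm_restrictₗ_le J x) (hnorm x x.2)
  obtain ⟨g, hg, hgR⟩ := hX X (J → ℝ) R id hR LipschitzWith.id
  refine ⟨hR.injective, LinearMap.range_eq_top.1 ?_⟩
  refine (LinearMap.range R).eq_top_of_lipschitzWith_retraction
    (fun w => ⟨R (g w), LinearMap.mem_range_self R _⟩)
    (by simpa using (hR.lipschitz.comp hg).subtype_mk fun w => LinearMap.mem_range_self R (g w))
    ?_ fun i => ?_
  · rintro ⟨_, x, rfl⟩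
    exact Subtype.ext (congrArg R (hgR x))
  · obtain ⟨x, hxX, hxi, hx⟩ := hdom i i.2
    exact ⟨R ⟨x, hxX⟩, LinearMap.mem_range_self R _, hxi,
      fun j hji => hx j j.2 (Subtype.coe_ne_coe.2 hji)⟩

theorem Submodule.exists_graph_of_linearEquiv [DecidableEq ι] (X : Submodule ℝ (ι → ℝ))
    (J : Finset ι) (e : X ≃ₗ[ℝ] (J → ℝ)) (he : ∀ x, e x = restrictₗ J x)
    (hnorm : ∀ x : X, ‖(x : ι → ℝ)‖ ≤ ‖e x‖) :
    ∃ c : ι → ι → ℝ, (∀ i ∉ J, ∑ j ∈ J, |c i j| ≤ 1) ∧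
      (X : Set (ι → ℝ)) = {x | ∀ i ∉ J, x i = ∑ j ∈ J, c i j * x j} := by
  set c : ι → ι → ℝ := fun i j =>
    if hj : j ∈ J then (e.symm (Pi.single ⟨j, hj⟩ 1) : ι → ℝ) i else 0
  have hsymm : ∀ y i, (e.symm y : ι → ℝ) i = ∑ k : J, c i k * y k := fun y i => by
    rw [e.coe_symm_apply_eq_sum]
    exact sum_congr rfl fun k _ => by simp only [c, dif_pos k.2]
  have hsymm_restrict : ∀ x i, (e.symm (restrictₗ J x) : ι → ℝ) i = ∑ j ∈ J, c i j * x j :=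
    fun x i => (hsymm _ i).trans (sum_coe_sort J fun j => c i j * x j)
  have hfix : ∀ x : X, e.symm (restrictₗ J x) = x := fun x => by rw [← he, e.symm_apply_apply]
  refine ⟨c, fun i _ => ?_, Set.ext fun x => ⟨fun hx i _ => ?_, fun hx => ?_⟩⟩
  · set y := e.symm fun k => (SignType.sign (c i k) : ℝ)
    calc ∑ j ∈ J, |c i j| = (y : ι → ℝ) i := by
          rw [hsymm, ← sum_coe_sort J]
          simp only [self_mul_sign]
      _ ≤ ‖(y : ι → ℝ)‖ := (le_abs_self _).trans (norm_le_pi_norm (y : ι → ℝ) i)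
      _ ≤ ‖e y‖ := hnorm y
      _ ≤ 1 := by
          rw [e.apply_symm_apply]
          refine (pi_norm_le_iff_of_nonneg zero_le_one).2 fun k => ?_
          rcases lt_trichotomy (c i k) 0 with h | h | h <;> simp [h]
  · rw [← hsymm_restrict, hfix ⟨x, hx⟩]
  · rw [← show (e.symm (restrictₗ J x) : ι → ℝ) = x from funext fun i => ?_]
    · exact coe_mem _
    by_cases hi : i ∈ J
    · have := congrFun (e.apply_symm_apply (restrictₗ J x)) ⟨i, hi⟩
      rwa [he] at this
    · rw [hsymm_restrict, hx i hi]

theorem Submodule.exists_graph_of_isInjectiveMetricSpace [DecidableEq ι]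
    (X : Submodule ℝ (ι → ℝ)) (hX : IsInjectiveMetricSpace X) :
    ∃ J : Finset ι, J.card = Module.finrank ℝ X ∧ ∃ c : ι → ι → ℝ,
      (∀ i ∉ J, ∑ j ∈ J, |c i j| ≤ 1) ∧
      (X : Set (ι → ℝ)) = {x | ∀ i ∉ J, x i = ∑ j ∈ J, c i j * x j} := by
  obtain ⟨J, hnorm, hdom⟩ := X.exists_minimal_norming_finset
  set e := LinearEquiv.ofBijective _
    (bijective_restrictₗ_of_isInjectiveMetricSpace X J hX hnorm hdom)
  refine ⟨J, ?_, X.exists_graph_of_linearEquiv J e (fun _ => rfl) fun x => hnorm x x.2⟩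
  rw [e.finrank_eq, Module.finrank_fintype_fun_eq_card, Fintype.card_coe]

/-- A linear subspace `X ⊆ l∞ⁿ` of dimension `k` is injective iff there is a set `J` of `k`
coordinates such that `X` is the graph of a linear map whose coefficients `c i j` satisfy
`∑_{j ∈ J} |c i j| ≤ 1` for every coordinate `i ∉ J`. -/
theorem linearSubspace_injective_iff {n : ℕ} (X : Submodule ℝ (Fin n → ℝ)) (k : ℕ)
    (hk : k = Module.finrank ℝ X) :
    IsInjectiveSubset (X : Set (Fin n → ℝ)) ↔
      ∃ J : Finset (Fin n), J.card = k ∧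
        ∃ c : Fin n → Fin n → ℝ,
          (∀ i ∉ J, ∑ j ∈ J, |c i j| ≤ 1) ∧
          (X : Set (Fin n → ℝ)) = {x | ∀ i ∉ J, x i = ∑ j ∈ J, c i j * x j} := by
  constructor
  · intro hX
    obtain ⟨J, hJ, hc⟩ := X.exists_graph_of_isInjectiveMetricSpace hX
    exact ⟨J, hJ.trans hk.symm, hc⟩
  · rintro ⟨J, -, c, hc, hXc⟩
    rw [hXc]
    exact isInjectiveMetricSpace_graph J c hc
end

section
/- Let ν ∈ ℝ^n ∖ {0}. The hyperplane X := { x ∈ ℝ^n : x·ν = 0 }, regarded as a subset of l∞^n, is injective if and only if ‖ν‖₁ ≤ 2‖ν‖∞, where ‖ν‖₁ = Σ_i |ν_i| and ‖ν‖∞ = max_i |ν_i| and x·ν denotes the standard scalar product on ℝ^n. -/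
open Set Metric

lemma sum_ite_mul_aux {n : ℕ} (μ x : Fin n → ℝ) (k : Fin n) (v : ℝ) :
    ∑ i, (if i = k then v else x i) * μ i = ∑ i, x i * μ i + (v - x k) * μ k := by
  have h : ∑ i, ((if i = k then v else x i) * μ i - x i * μ i) = (v - x k) * μ k := by
    rw [Finset.sum_eq_single_of_mem k (Finset.mem_univ k)]
    · simp only [eq_self_iff_true, if_true]; ring
    · intro b _ hb; simp [hb]
  rw [Finset.sum_sub_distrib] at h
  linarith

/-- For `ν ≠ 0`, the hyperplane `{x : x·ν = 0} ⊆ l∞ⁿ` is injective iff `‖ν‖₁ ≤ 2 ‖ν‖`.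
(Here `‖ν‖` is the sup-norm of `ν : Fin n → ℝ`.) -/
theorem hyperplane_injective_iff {n : ℕ} (ν : Fin n → ℝ) (hν : ν ≠ 0) :
    IsInjectiveSubset {x : Fin n → ℝ | ∑ i, x i * ν i = 0} ↔
      ∑ i, |ν i| ≤ 2 * ‖ν‖ := by
  set H : Set (Fin n → ℝ) := {x : Fin n → ℝ | ∑ i, x i * ν i = 0} with hH
  constructor
  · -- injective → inequality
    intro hinj
    by_contra hlt
    push_neg at hlt
    set L : ℝ := ∑ i, |ν i| with hLdef
    have hL0 : 0 < L := lt_of_le_of_lt (by positivity) hlt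
    -- get a 1-Lipschitz retraction g : l∞ⁿ → H
    obtain ⟨g, hg, hgid⟩ := hinj H (Fin n → ℝ) Subtype.val id
      isometry_subtype_coe LipschitzWith.id
    -- the sign vector
    set σ : Fin n → ℝ := fun j => if ν j < 0 then -1 else if 0 < ν j then 1 else 0 with hσ
    have hσabs : ∀ j, |σ j| ≤ 1 := by
      intro j; simp only [hσ]
      split_ifs <;> simp
    have hσν : ∀ j, σ j * ν j = |ν j| := by
      intro j; simp only [hσ]
      rcases lt_trichotomy (ν j) 0 with h | h | h
      · rw [if_pos h, abs_of_neg h]; ring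
      · simp [h]
      · rw [if_neg (not_lt.2 h.le), if_pos h, abs_of_pos h]; ring
    set z : Fin n → ℝ := (g σ).1 with hzdef
    have hzH : ∑ i, z i * ν i = 0 := (g σ).2
    -- for any x ∈ H, dist z x ≤ dist σ x
    have hkey : ∀ x (hx : x ∈ H), dist z x ≤ dist σ x := by
      intro x hx
      have h1 : g x = ⟨x, hx⟩ := hgid ⟨x, hx⟩
      have h2 := hg.dist_le_mul σ x
      rw [h1] at h2
      simpa [Subtype.dist_eq, hzdef] using h2
    -- |z j| ≤ 1
    have h0H : (0 : Fin n → ℝ) ∈ H := by simp [hH]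
    have hz1 : ∀ j, |z j| ≤ 1 := by
      intro j
      have h1 : dist z 0 ≤ dist σ (0 : Fin n → ℝ) := hkey 0 h0H
      have h2 : dist σ (0 : Fin n → ℝ) ≤ 1 := by
        rw [dist_pi_le_iff zero_le_one]
        intro i
        simpa [Real.dist_eq] using hσabs i
      have h3 := dist_le_pi_dist z (0 : Fin n → ℝ) j
      simp only [Pi.zero_apply, Real.dist_eq, sub_zero] at h3
      linarith
    -- z j = σ j for each j with ν j ≠ 0
    have hzσ : ∀ j, ν j ≠ 0 → z j = σ j := by
      intro j hj
      set a : ℝ := |ν j| with hadef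
      have ha : 0 < a := abs_pos.2 hj
      have haM : a ≤ ‖ν‖ := by
        simpa [Real.norm_eq_abs] using norm_le_pi_norm ν j
      have hLa : 0 < L - 2 * a := by linarith
      set t : ℝ := L / (L - 2 * a) with htdef
      have ht : 0 < t := div_pos hL0 hLa
      have htL : t * (L - 2 * a) = L := div_mul_cancel₀ L (ne_of_gt hLa)
      set w : Fin n → ℝ := fun i => if i = j then σ j * (1 + t) else σ i * (1 - t) with hw
      have hwH : w ∈ H := by
        show ∑ i, w i * ν i = 0
        have := sum_ite_mul_aux ν (fun i => σ i * (1 - t)) j (σ j * (1 + t))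
        simp only [hw]
        rw [this]
        have h1 : ∑ i, σ i * (1 - t) * ν i = (1 - t) * L := by
          rw [hLdef, Finset.mul_sum]
          refine Finset.sum_congr rfl fun i _ => ?_
          rw [← hσν i]; ring
        rw [h1]
        have h2 : (σ j * (1 + t) - σ j * (1 - t)) * ν j = 2 * t * a := by
          have : σ j * (1 + t) - σ j * (1 - t) = 2 * t * σ j := by ring
          rw [this, hadef, ← hσν j]; ring
        rw [h2]
        nlinarith [htL]
      have hdistw : dist σ w ≤ t := by
        rw [dist_pi_le_iff ht.le]
        intro i
        by_cases hij : i = j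
        · subst hij
          simp only [hw, if_pos rfl, Real.dist_eq]
          have : σ i - σ i * (1 + t) = -(σ i * t) := by ring
          rw [this, abs_neg, abs_mul]
          calc |σ i| * |t| ≤ 1 * |t| := by
                have := hσabs i; have : |t| ≥ 0 := abs_nonneg t; nlinarith [hσabs i, abs_nonneg t]
            _ = t := by rw [one_mul, abs_of_pos ht]
        · simp only [hw, if_neg hij, Real.dist_eq]
          have : σ i - σ i * (1 - t) = σ i * t := by ring
          rw [this, abs_mul]
          calc |σ i| * |t| ≤ 1 * |t| := by nlinarith [hσabs i, abs_nonneg t]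
            _ = t := by rw [one_mul, abs_of_pos ht]
      have hzw : dist z w ≤ t := le_trans (hkey w hwH) hdistw
      have hzwj : |z j - σ j * (1 + t)| ≤ t := by
        have h3 := dist_le_pi_dist z w j
        simp only [hw, if_pos rfl, Real.dist_eq] at h3
        linarith
      rw [abs_le] at hzwj
      have hz1j := hz1 j
      rw [abs_le] at hz1j
      rcases lt_trichotomy (ν j) 0 with h | h | h
      · have hσj : σ j = -1 := by simp [hσ, if_pos h]
        rw [hσj] at hzwj ⊢
        linarith [hzwj.2, hz1j.1]
      · exact absurd h hj
      · have hσj : σ j = 1 := by simp [hσ, not_lt.2 h.le, h]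
        rw [hσj] at hzwj ⊢
        linarith [hzwj.1, hz1j.2]
    -- conclude
    have hfinal : ∑ i, z i * ν i = L := by
      rw [hLdef]
      refine Finset.sum_congr rfl fun i _ => ?_
      by_cases hi : ν i = 0
      · simp [hi]
      · rw [hzσ i hi, hσν i]
    rw [hfinal] at hzH
    linarith
  · -- inequality → injective
    intro hle
    -- find index k maximizing |ν k|
    have hne : (Finset.univ : Finset (Fin n)).Nonempty := by
      rcases Function.ne_iff.1 hν with ⟨j, -⟩
      exact ⟨j, Finset.mem_univ j⟩
    obtain ⟨k, -, hk⟩ := Finset.exists_max_image Finset.univ (fun i => |ν i|) hne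
    have hk' : ∀ i, |ν i| ≤ |ν k| := fun i => hk i (Finset.mem_univ i)
    have hnorm : ‖ν‖ = |ν k| := by
      apply le_antisymm
      · rw [pi_norm_le_iff_of_nonneg (abs_nonneg _)]
        intro i
        simpa [Real.norm_eq_abs] using hk' i
      · simpa [Real.norm_eq_abs] using norm_le_pi_norm ν k
    have hνk : ν k ≠ 0 := by
      intro h
      apply hν
      funext i
      have := hk' i
      rw [h, abs_zero] at this
      exact abs_nonpos_iff.1 this ▸ rfl
    have hsum_le : ∑ i ∈ Finset.univ.erase k, |ν i| ≤ |ν k| := by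
      have h1 : ∑ i ∈ Finset.univ.erase k, |ν i| = (∑ i, |ν i|) - |ν k| := by
        rw [← Finset.add_sum_erase Finset.univ (fun i => |ν i|) (Finset.mem_univ k)]
        ring
      rw [h1, ← hnorm]
      linarith [hle, hnorm.le]
    -- the retraction
    set r : (Fin n → ℝ) → (Fin n → ℝ) :=
      fun x i => if i = k then x k - (∑ j, x j * ν j) / ν k else x i with hr
    have hrmem : ∀ x, r x ∈ H := by
      intro x
      show ∑ i, r x i * ν i = 0
      simp only [hr]
      rw [sum_ite_mul_aux ν x k (x k - (∑ j, x j * ν j) / ν k)]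
      field_simp
      ring
    have hrfix : ∀ x, x ∈ H → r x = x := by
      intro x hx
      have hx' : ∑ j, x j * ν j = 0 := hx
      funext i
      simp only [hr]
      split_ifs with h
      · subst h; rw [hx']; simp
      · rfl
    have hrlip : ∀ x y, dist (r x) (r y) ≤ dist x y := by
      intro x y
      rw [dist_pi_le_iff dist_nonneg]
      intro i
      by_cases hik : i = k
      · subst hik
        simp only [hr, if_pos rfl, Real.dist_eq]
        set E : ℝ := ∑ j ∈ Finset.univ.erase i, (x j - y j) * ν j with hE
        have hsub : (∑ j, x j * ν j) - ∑ j, y j * ν j = (x i - y i) * ν i + E := by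
          calc (∑ j, x j * ν j) - ∑ j, y j * ν j = ∑ j, (x j - y j) * ν j := by
                rw [← Finset.sum_sub_distrib]
                exact Finset.sum_congr rfl fun j _ => by ring
            _ = (x i - y i) * ν i + E :=
                (Finset.add_sum_erase Finset.univ (fun j => (x j - y j) * ν j)
                  (Finset.mem_univ i)).symm
        have hEbound : |E| ≤ dist x y * |ν i| := by
          calc |E| ≤ ∑ j ∈ Finset.univ.erase i, |(x j - y j) * ν j| :=
                Finset.abs_sum_le_sum_abs _ _
            _ ≤ ∑ j ∈ Finset.univ.erase i, dist x y * |ν j| := by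
                refine Finset.sum_le_sum fun j _ => ?_
                rw [abs_mul]
                have h1 : |x j - y j| ≤ dist x y := by
                  have := dist_le_pi_dist x y j
                  rwa [Real.dist_eq] at this
                exact mul_le_mul_of_nonneg_right h1 (abs_nonneg _)
            _ = dist x y * ∑ j ∈ Finset.univ.erase i, |ν j| := by
                rw [Finset.mul_sum]
            _ ≤ dist x y * |ν i| := by
                exact mul_le_mul_of_nonneg_left hsum_le dist_nonneg
        have heq : x i - (∑ j, x j * ν j) / ν i - (y i - (∑ j, y j * ν j) / ν i)
            = -E / ν i := by
          field_simp
          linarith [hsub]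
        rw [heq, abs_div, abs_neg]
        rw [div_le_iff₀ (abs_pos.2 hνk)]
        exact hEbound
      · simp only [hr, if_neg hik]
        exact dist_le_pi_dist x y i
    -- prove injectivity
    intro A B _ _ i f hi hf
    have hi_inj : Function.Injective i := hi.injective
    classical
    set F : B → (Fin n → ℝ) := fun b => if h : ∃ a, i a = b then (f h.choose).1 else 0
      with hF
    have hFi : ∀ a, F (i a) = (f a).1 := by
      intro a
      have h : ∃ a', i a' = i a := ⟨a, rfl⟩
      simp only [hF, dif_pos h]
      rw [hi_inj h.choose_spec]
    have hFlip : LipschitzOnWith 1 F (Set.range i) := by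
      apply LipschitzOnWith.of_dist_le_mul
      rintro b1 ⟨a1, rfl⟩ b2 ⟨a2, rfl⟩
      rw [hFi a1, hFi a2]
      have h1 : dist (f a1).1 (f a2).1 = dist (f a1) (f a2) := (Subtype.dist_eq _ _).symm
      rw [h1]
      have h2 : dist (f a1) (f a2) ≤ dist (i a1) (i a2) := by
        rw [hi.dist_eq]
        simpa using hf.dist_le_mul a1 a2
      simpa using h2
    obtain ⟨G, hG, hGF⟩ := hFlip.extend_pi
    refine ⟨fun b => ⟨r (G b), hrmem (G b)⟩, ?_, ?_⟩
    · apply LipschitzWith.of_dist_le_mul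
      intro b1 b2
      rw [Subtype.dist_eq]
      calc dist (r (G b1)) (r (G b2)) ≤ dist (G b1) (G b2) := hrlip _ _
        _ ≤ 1 * dist b1 b2 := hG.dist_le_mul b1 b2
    · intro a
      have h1 : G (i a) = (f a).1 := by
        rw [← hGF (Set.mem_range_self a), hFi a]
      apply Subtype.ext
      show r (G (i a)) = (f a).1
      rw [h1]
      exact hrfix _ (f a).2
end

section
/- Let ν ∈ ℝ^n ∖ {0}. The closed half-space H := { x ∈ ℝ^n : x·ν ≥ 0 }, regarded as a subset of l∞^n, is injective if and only if ‖ν‖₁ ≤ 2‖ν‖∞, where ‖ν‖₁ = Σ_i |ν_i| and ‖ν‖∞ = max_i |ν_i| and x·ν denotes the standard scalar product on ℝ^n. -/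
open Set Metric

section Aux
open Finset

private lemma exists_lam (a b : ℝ) :
    ∃ l : ℝ, 0 ≤ l ∧ l ≤ 1 ∧ max 0 (-b) - max 0 (-a) = l * (a - b) := by
  rcases le_or_gt 0 a with ha | ha <;> rcases le_or_gt 0 b with hb | hb
  · exact ⟨0, le_rfl, zero_le_one, by rw [max_eq_left (by linarith), max_eq_left (by linarith)]; ring⟩
  · refine ⟨(-b) / (a - b), div_nonneg (by linarith) (by linarith), ?_, ?_⟩
    · rw [div_le_one (by linarith)]; linarith
    · rw [max_eq_right (by linarith), max_eq_left (by linarith), div_mul_cancel₀]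
      · ring
      · linarith
  · refine ⟨(-a) / (b - a), div_nonneg (by linarith) (by linarith), ?_, ?_⟩
    · rw [div_le_one (by linarith)]; linarith
    · rw [max_eq_left (by linarith), max_eq_right (by linarith), div_mul_eq_mul_div,
        eq_div_iff (by linarith : b - a ≠ 0)]
      ring
  · exact ⟨1, zero_le_one, le_rfl, by rw [max_eq_right (by linarith), max_eq_right (by linarith)]; ring⟩

private lemma extend_lip {n : ℕ} {A B : Type} [MetricSpace A] [MetricSpace B]
    (i : A → B) (hi : Isometry i) (f : A → Fin n → ℝ) (hf : LipschitzWith 1 f) :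
    ∃ G : B → Fin n → ℝ, LipschitzWith 1 G ∧ ∀ a, G (i a) = f a := by
  classical
  set f' : B → Fin n → ℝ := fun b => if h : ∃ a, i a = b then f h.choose else 0 with hf'
  have hkey : ∀ a : A, f' (i a) = f a := by
    intro a
    have h : ∃ a', i a' = i a := ⟨a, rfl⟩
    have : h.choose = a := hi.injective h.choose_spec
    simp only [hf', dif_pos h, this]
  have hlip : LipschitzOnWith 1 f' (Set.range i) := by
    refine LipschitzOnWith.of_dist_le_mul ?_
    rintro x ⟨a, rfl⟩ y ⟨a', rfl⟩
    rw [hkey, hkey, NNReal.coe_one, one_mul, hi.dist_eq]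
    exact (hf.dist_le_mul a a').trans (by simp)
  obtain ⟨G, hG, hEq⟩ := hlip.extend_pi
  exact ⟨G, hG, fun a => by rw [← hEq ⟨a, rfl⟩, hkey]⟩

private lemma isInjective_of_retraction {n : ℕ} (S : Set (Fin n → ℝ))
    (r : (Fin n → ℝ) → Fin n → ℝ) (hmem : ∀ x, r x ∈ S) (hfix : ∀ x ∈ S, r x = x)
    (hlip : LipschitzWith 1 r) : IsInjectiveMetricSpace S := by
  intro A B _ _ i f hi hf
  have hf0 : LipschitzWith 1 (fun a => (f a : Fin n → ℝ)) := by
    refine LipschitzWith.of_dist_le_mul fun a b => ?_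
    rw [NNReal.coe_one, one_mul, ← Subtype.dist_eq]
    exact (hf.dist_le_mul a b).trans (by simp)
  obtain ⟨G, hG, hGi⟩ := extend_lip i hi _ hf0
  refine ⟨fun b => ⟨r (G b), hmem _⟩, ?_, ?_⟩
  · refine LipschitzWith.of_dist_le_mul fun b b' => ?_
    rw [NNReal.coe_one, one_mul, Subtype.dist_eq]
    calc dist (r (G b)) (r (G b')) ≤ dist (G b) (G b') := by
          have := hlip.dist_le_mul (G b) (G b'); rwa [NNReal.coe_one, one_mul] at this
      _ ≤ dist b b' := by have := hG.dist_le_mul b b'; rwa [NNReal.coe_one, one_mul] at this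
  · intro a
    apply Subtype.ext
    simp only [hGi a, hfix _ (f a).2]
private lemma retraction_exists {n : ℕ} (ν : Fin n → ℝ) (hν : ν ≠ 0)
    (hT : ∑ i, |ν i| ≤ 2 * ‖ν‖) :
    ∃ r : (Fin n → ℝ) → Fin n → ℝ,
      (∀ x, 0 ≤ ∑ k, r x k * ν k) ∧
      (∀ x, 0 ≤ ∑ k, x k * ν k → r x = x) ∧ LipschitzWith 1 r := by
  classical
  obtain ⟨j, hj⟩ := Function.ne_iff.mp hν
  obtain ⟨i0, -, hmax⟩ := Finset.exists_max_image Finset.univ (fun i => |ν i|) ⟨j, mem_univ j⟩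
  set a : ℝ := |ν i0| with ha_def
  have ha : 0 < a := lt_of_lt_of_le (abs_pos.mpr (by simpa using hj)) (hmax j (mem_univ j))
  have hnorm : ‖ν‖ ≤ a := by
    refine (pi_norm_le_iff_of_nonneg (abs_nonneg (ν i0))).mpr fun i => ?_
    rw [Real.norm_eq_abs]; exact hmax i (mem_univ i)
  have hTa : ∑ i, |ν i| ≤ 2 * a := by linarith
  set σ : ℝ := if 0 ≤ ν i0 then 1 else -1 with hσ_def
  have hσa : σ * ν i0 = a := by
    rw [hσ_def, ha_def]; split_ifs with h
    · rw [one_mul, abs_of_nonneg h]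
    · rw [neg_one_mul, abs_of_neg (lt_of_not_ge h)]
  set d : (Fin n → ℝ) → ℝ := fun x => ∑ k, x k * ν k with hd_def
  set t : (Fin n → ℝ) → ℝ := fun x => max 0 (-(d x)) with ht_def
  have ht_nonneg : ∀ x, 0 ≤ t x := fun x => le_max_left _ _
  have ht_ge : ∀ x, -(d x) ≤ t x := fun x => le_max_right _ _
  set r : (Fin n → ℝ) → Fin n → ℝ := fun x k => if k = i0 then x k + σ * t x / a else x k
    with hr_def
  have hdot : ∀ x, d (r x) = d x + t x := by
    intro x
    have h1 : ∀ k ∈ Finset.univ, r x k * ν k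
        = x k * ν k + (if k = i0 then σ * t x / a * ν k else 0) := by
      intro k _
      by_cases hk : k = i0 <;> simp [hr_def, hk] <;> ring
    have h2 : σ * t x / a * ν i0 = t x := by
      have : σ * t x / a * ν i0 = t x * (σ * ν i0) / a := by ring
      rw [this, hσa, mul_div_assoc, div_self ha.ne', mul_one]
    calc d (r x) = ∑ k, (x k * ν k + (if k = i0 then σ * t x / a * ν k else 0)) :=
          Finset.sum_congr rfl h1
      _ = d x + t x := by
          rw [Finset.sum_add_distrib, Finset.sum_ite_eq' Finset.univ i0
            (fun k => σ * t x / a * ν k), if_pos (Finset.mem_univ i0), h2]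
  refine ⟨r, ?_, ?_, ?_⟩
  · intro x
    have := ht_ge x
    have := hdot x
    show (0:ℝ) ≤ ∑ k, r x k * ν k
    have hrx : ∑ k, r x k * ν k = d (r x) := rfl
    rw [hrx]; linarith
  · intro x hx
    have ht0 : t x = 0 := max_eq_left (by simpa using hx)
    funext k
    by_cases hk : k = i0 <;> simp [hr_def, hk, ht0]
  · refine LipschitzWith.of_dist_le_mul fun x y => ?_
    rw [NNReal.coe_one, one_mul]
    refine (dist_pi_le_iff dist_nonneg).2 fun k => ?_
    by_cases hk : k = i0
    · subst hk
      obtain ⟨l, hl0, hl1, hleq⟩ := exists_lam (d x) (d y)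
      set D := dist x y with hD
      have hD0 : 0 ≤ D := dist_nonneg
      set u : ℝ := x k - y k with hu_def
      have hu : |u| ≤ D := by
        rw [hu_def, ← Real.dist_eq]; exact dist_le_pi_dist x y k
      set w : ℝ := (∑ m ∈ Finset.univ.erase k, σ * ν m * (y m - x m)) / a with hw_def
      have hsum_erase : ∑ m ∈ Finset.univ.erase k, |ν m| = (∑ i, |ν i|) - a := by
        have := Finset.sum_erase_add Finset.univ (fun m => |ν m|) (mem_univ k)
        linarith
      have hw : |w| ≤ D := by
        rw [hw_def, abs_div, abs_of_pos ha, div_le_iff₀ ha]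
        calc |∑ m ∈ Finset.univ.erase k, σ * ν m * (y m - x m)|
            ≤ ∑ m ∈ Finset.univ.erase k, |σ * ν m * (y m - x m)| :=
              Finset.abs_sum_le_sum_abs _ _
          _ ≤ ∑ m ∈ Finset.univ.erase k, |ν m| * D := by
              refine Finset.sum_le_sum fun m _ => ?_
              rw [abs_mul, abs_mul]
              have h1 : |σ| = 1 := by rw [hσ_def]; split_ifs <;> norm_num
              rw [h1, one_mul]
              refine mul_le_mul_of_nonneg_left ?_ (abs_nonneg _)
              rw [← Real.dist_eq]
              exact le_of_le_of_eq (dist_le_pi_dist y x m) (dist_comm y x)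
          _ ≤ D * a := by
              rw [← Finset.sum_mul, hsum_erase]
              nlinarith
      have hwu : σ * (d y - d x) / a = w - u := by
        have hsub : d y - d x = ∑ m, ν m * (y m - x m) := by
          rw [hd_def]
          simp only [← Finset.sum_sub_distrib]
          exact Finset.sum_congr rfl fun m _ => by ring
        have hsplit : ∑ m, σ * ν m * (y m - x m)
            = (∑ m ∈ Finset.univ.erase k, σ * ν m * (y m - x m)) + σ * ν k * (y k - x k) :=
          (Finset.sum_erase_add Finset.univ _ (mem_univ k)).symm
        have hνk : σ * ν k * (y k - x k) = a * (y k - x k) := by rw [hσa]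
        rw [hsub, Finset.mul_sum]
        have h4 : ∑ m, σ * (ν m * (y m - x m)) = ∑ m, σ * ν m * (y m - x m) :=
          Finset.sum_congr rfl fun m _ => by ring
        rw [h4, hsplit, hνk, add_div, mul_comm a, mul_div_assoc, div_self ha.ne', mul_one, hw_def,
          hu_def]
        ring
      have hkey : r x k - r y k = (1 - l) * u + l * w := by
        have hleq' : t y - t x = l * (d x - d y) := hleq
        have h1 : t x - t y = l * (d y - d x) := by linear_combination -hleq'
        have h2 : r x k - r y k = u + σ * (t x - t y) / a := by
          simp only [hr_def, if_pos rfl, hu_def]; ring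
        rw [h2, h1]
        have h3 : σ * (l * (d y - d x)) / a = l * (σ * (d y - d x) / a) := by ring
        rw [h3, hwu]; ring
      rw [Real.dist_eq, hkey]
      obtain ⟨hu1, hu2⟩ := abs_le.mp hu
      obtain ⟨hw1, hw2⟩ := abs_le.mp hw
      rw [abs_le]
      constructor <;> nlinarith
    · simp only [hr_def, if_neg hk]
      exact dist_le_pi_dist x y k
private lemma necessity {n : ℕ} (ν : Fin n → ℝ) (hν : ν ≠ 0)
    (hInj : IsInjectiveMetricSpace {x : Fin n → ℝ | 0 ≤ ∑ i, x i * ν i})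
    : ∑ i, |ν i| ≤ 2 * ‖ν‖ := by
  classical
  by_contra hc
  push_neg at hc
  set T : ℝ := ∑ i, |ν i| with hT_def
  have hMpos : 0 < ‖ν‖ := norm_pos_iff.mpr hν
  have hTpos : 0 < T := by linarith
  set s : Fin n → ℝ := fun k => if 0 ≤ ν k then 1 else -1 with hs_def
  have hsm : ∀ k, s k * ν k = |ν k| := by
    intro k; rw [hs_def]; dsimp only; split_ifs with h
    · rw [one_mul, abs_of_nonneg h]
    · rw [neg_one_mul, abs_of_neg (lt_of_not_ge h)]
  have hss : ∀ k, s k * s k = 1 := by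
    intro k; rw [hs_def]; dsimp only; split_ifs <;> norm_num
  have hs1 : ∀ k, |s k| = 1 := by
    intro k; rw [hs_def]; dsimp only; split_ifs <;> norm_num
  have hνs : ∀ k, ν k = |ν k| * s k := by
    intro k; rw [← hsm k, mul_comm (s k) (ν k), mul_assoc, hss k, mul_one]
  have hpos : ∀ k, 0 < T - 2 * |ν k| := by
    intro k
    have h1 : |ν k| ≤ ‖ν‖ := by
      have := norm_le_pi_norm ν k; rwa [Real.norm_eq_abs] at this
    linarith
  set r : Fin n → ℝ := fun k => T / (T - 2 * |ν k|) with hr_def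
  have hrpos : ∀ k, 0 < r k := fun k => div_pos hTpos (hpos k)
  set c : Fin n → (Fin n → ℝ) := fun i k => s k * (if k = i then -1 - r i else -1 + r i)
    with hc_def
  have hcH : ∀ i, 0 ≤ ∑ k, c i k * ν k := by
    intro i
    have h1 : ∀ k ∈ Finset.univ, c i k * ν k
        = |ν k| * (-1 + r i) + (if k = i then |ν i| * (-2 * r i) else 0) := by
      intro k _
      rw [hc_def]; dsimp only
      by_cases hk : k = i
      · subst hk; rw [if_pos rfl, if_pos rfl]; linear_combination (-1 - r k) * hsm k
      · rw [if_neg hk, if_neg hk]; linear_combination (-1 + r i) * hsm k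
    have h2 : ∑ k, c i k * ν k = T * (-1 + r i) + |ν i| * (-2 * r i) := by
      rw [Finset.sum_congr rfl h1, Finset.sum_add_distrib,
        Finset.sum_ite_eq' Finset.univ i (fun _ => |ν i| * (-2 * r i)),
        if_pos (Finset.mem_univ i), ← Finset.sum_mul]
    have h3 : r i * (T - 2 * |ν i|) = T := div_mul_cancel₀ T (hpos i).ne'
    rw [h2]; nlinarith [h3]
  set z' : Fin n → ℝ := fun k => -(s k) with hz'_def
  have hdist : ∀ i, dist z' (c i) ≤ r i := by
    intro i
    refine (dist_pi_le_iff (hrpos i).le).2 fun k => ?_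
    rw [Real.dist_eq, hz'_def, hc_def]; dsimp only
    by_cases hk : k = i
    · rw [if_pos hk]
      have : -s k - s k * (-1 - r i) = s k * r i := by ring
      rw [this, abs_mul, hs1 k, one_mul, abs_of_nonneg (hrpos i).le]
    · rw [if_neg hk]
      have : -s k - s k * (-1 + r i) = -(s k * r i) := by ring
      rw [this, abs_neg, abs_mul, hs1 k, one_mul, abs_of_nonneg (hrpos i).le]
  set Aset : Set (Fin n → ℝ) := Set.range c with hA_def
  set Bset : Set (Fin n → ℝ) := insert z' Aset with hB_def
  have hAB : Aset ⊆ Bset := Set.subset_insert _ _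
  set H : Set (Fin n → ℝ) := {x : Fin n → ℝ | 0 ≤ ∑ i, x i * ν i} with hH_def
  have hmemH : ∀ x : ↥Aset, (x : Fin n → ℝ) ∈ H := by
    rintro ⟨x, i, rfl⟩
    exact hcH i
  set f : ↥Aset → ↥H := fun x => ⟨x.val, hmemH x⟩ with hf_def
  have hiso : Isometry (Set.inclusion hAB) :=
    Isometry.of_dist_eq fun x y => by rw [Subtype.dist_eq, Subtype.dist_eq]
  have hflip : LipschitzWith 1 f := by
    refine LipschitzWith.of_dist_le_mul fun x y => ?_
    rw [NNReal.coe_one, one_mul, Subtype.dist_eq, Subtype.dist_eq]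
  obtain ⟨g, hg, hgi⟩ := hInj ↥Aset ↥Bset (Set.inclusion hAB) f hiso hflip
  set zB : ↥Bset := ⟨z', Set.mem_insert _ _⟩ with hzB_def
  set z : Fin n → ℝ := (g zB).val with hz_def
  have hzH : 0 ≤ ∑ k, z k * ν k := (g zB).2
  have hzc : ∀ i, |z i - c i i| ≤ r i := by
    intro i
    set aA : ↥Aset := ⟨c i, Set.mem_range_self i⟩ with haA_def
    have h1 : dist (g zB) (g (Set.inclusion hAB aA)) ≤ dist zB (Set.inclusion hAB aA) := by
      have := hg.dist_le_mul zB (Set.inclusion hAB aA)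
      rwa [NNReal.coe_one, one_mul] at this
    rw [hgi aA] at h1
    have h2 : dist (g zB) (f aA) = dist z (c i) := by
      rw [Subtype.dist_eq]
    have h3 : dist zB (Set.inclusion hAB aA) = dist z' (c i) := by
      rw [Subtype.dist_eq]
    rw [h2, h3] at h1
    have h4 : |z i - c i i| ≤ dist z (c i) := by
      rw [← Real.dist_eq]; exact dist_le_pi_dist z (c i) i
    exact h4.trans (h1.trans (hdist i))
  have hkey : ∀ k, z k * ν k ≤ -|ν k| := by
    intro k
    have h1 : s k * z k ≤ -1 := by
      have h2 : s k * z k - s k * c k k ≤ |s k * (z k - c k k)| := by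
        have : s k * z k - s k * c k k = s k * (z k - c k k) := by ring
        rw [this]; exact le_abs_self _
      rw [abs_mul, hs1 k, one_mul] at h2
      have h3 : s k * c k k = -1 - r k := by
        rw [hc_def]; dsimp only; rw [if_pos rfl, ← mul_assoc, hss k, one_mul]
      have := hzc k
      nlinarith
    calc z k * ν k = |ν k| * (s k * z k) := by
          conv_lhs => rw [hνs k]
          ring
      _ ≤ |ν k| * (-1) := mul_le_mul_of_nonneg_left h1 (abs_nonneg _)
      _ = -|ν k| := by ring
  have hsum : ∑ k, z k * ν k ≤ -T := by
    calc ∑ k, z k * ν k ≤ ∑ k, -|ν k| := Finset.sum_le_sum fun k _ => hkey k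
      _ = -T := by rw [hT_def, ← Finset.sum_neg_distrib]
  linarith

end Aux

/-- For `ν ≠ 0`, the closed half-space `{x : x·ν ≥ 0} ⊆ l∞ⁿ` is injective iff `‖ν‖₁ ≤ 2 ‖ν‖∞`.
(Here `‖ν‖` is the sup-norm of `ν : Fin n → ℝ`.) -/
theorem halfspace_injective_iff {n : ℕ} (ν : Fin n → ℝ) (hν : ν ≠ 0) :
    IsInjectiveSubset {x : Fin n → ℝ | 0 ≤ ∑ i, x i * ν i} ↔
      ∑ i, |ν i| ≤ 2 * ‖ν‖ := by
  constructor
  · exact fun h => necessity ν hν h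
  · intro hT
    obtain ⟨r, hmem, hfix, hlip⟩ := retraction_exists ν hν hT
    exact isInjective_of_retraction _ r hmem (fun x hx => hfix x hx) hlip
end

section
/- Let ∅ ≠ S ⊂ l∞^n be a closed subset. Then the following are equivalent: (i) S is injective; (ii) there exists x ∈ S such that S ∩ B(x,r) is injective for every r ∈ (0,∞), where B(x,r) is the closed ball of radius r around x in l∞^n; (iii) there exists an increasing sequence (X_m)_{m∈ℕ} of injective subsets of S (i.e. X_m ⊂ X_{m+1} for all m) such that S = ⋃_{m∈ℕ} X_m. -/
open Set Metric

/-!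
In `l∞ⁿ` a subset is injective iff it is a `1`-Lipschitz retract of the whole space: an injective
`S` extends its own identity, and conversely a map into a retract extends coordinatewise by
McShane's theorem and is then pushed back into `S`. Retracting first onto a ball around a point of
`S` (by clamping each coordinate) and then onto `S` shows that `S ∩ B(x, r)` is again a retract;
the balls of radius `m + 1` then exhaust `S`. For the converse the retractions `r m` onto the
`X m` all fix a point of `X 0`, so each orbit `m ↦ r m y` lies in a compact ball; the limit of
the `r m` along an ultrafilter finer than `atTop` is `1`-Lipschitz, lands in the closed set `S`,
and fixes every `X k` because `r m` does for `m ≥ k`.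
-/

open Filter Topology

section Retract

variable {E : Type*} [PseudoMetricSpace E]

def IsOneLipschitzRetract (S : Set E) : Prop :=
  ∃ r : E → E, LipschitzWith 1 r ∧ (∀ y, r y ∈ S) ∧ ∀ x ∈ S, r x = x

theorem IsOneLipschitzRetract.inter_closedBall {S : Set E} (hS : IsOneLipschitzRetract S)
    {x : E} (hx : x ∈ S) {ρ : ℝ} (hB : IsOneLipschitzRetract (closedBall x ρ)) :
    IsOneLipschitzRetract (S ∩ closedBall x ρ) := by
  obtain ⟨r, hr, hrS, hrfix⟩ := hS
  obtain ⟨p, hp, hpB, hpfix⟩ := hB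
  refine ⟨r ∘ p, by simpa using hr.comp hp, fun y => ⟨hrS _, ?_⟩, fun z hz => ?_⟩
  · calc dist (r (p y)) x = dist (r (p y)) (r x) := by rw [hrfix x hx]
      _ ≤ dist (p y) x := by simpa using hr.dist_le_mul (p y) x
      _ ≤ ρ := hpB y
  · simp [Function.comp, hpfix z hz.2, hrfix z hz.1]

end Retract

theorem Isometry.exists_lipschitzWith_extend_pi {α β ι : Type*} [MetricSpace α]
    [PseudoMetricSpace β] [Fintype ι] {i : α → β} (hi : Isometry i) {K : NNReal} {f : α → ι → ℝ}
    (hf : LipschitzWith K f) : ∃ g : β → ι → ℝ, LipschitzWith K g ∧ ∀ a, g (i a) = f a := by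
  set f' := Function.extend i f 0
  have hf' : ∀ a, f' (i a) = f a := hi.injective.extend_apply f 0
  have hlip : LipschitzOnWith K f' (range i) := by
    rintro _ ⟨a, rfl⟩ _ ⟨b, rfl⟩
    rw [hf', hf', hi.edist_eq]
    exact hf a b
  obtain ⟨g, hg, hEq⟩ := hlip.extend_pi
  exact ⟨g, hg, fun a => (hEq (mem_range_self a)).symm.trans (hf' a)⟩

theorem IsInjectiveMetricSpace.isOneLipschitzRetract {E : Type} [MetricSpace E] {S : Set E}
    (h : IsInjectiveMetricSpace S) : IsOneLipschitzRetract S := by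
  obtain ⟨g, hg, hgS⟩ := h S E Subtype.val id isometry_subtype_coe LipschitzWith.id
  exact ⟨Subtype.val ∘ g, by simpa using (LipschitzWith.subtype_val S).comp hg, fun y => (g y).2,
    fun x hx => congrArg Subtype.val (hgS ⟨x, hx⟩)⟩

theorem IsOneLipschitzRetract.isInjectiveMetricSpace {ι : Type} [Fintype ι] {S : Set (ι → ℝ)}
    (h : IsOneLipschitzRetract S) : IsInjectiveMetricSpace S := by
  obtain ⟨r, hr, hrS, hrfix⟩ := h
  intro A B _ _ i f hi hf
  obtain ⟨G, hG, hGi⟩ := hi.exists_lipschitzWith_extend_pi ((LipschitzWith.subtype_val S).comp hf)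
  refine ⟨fun b => ⟨r (G b), hrS _⟩, by simpa using (hr.comp hG).subtype_mk (fun b => hrS (G b)),
    fun a => Subtype.ext ?_⟩
  simp [hGi, hrfix _ (f a).2]

theorem isInjectiveSubset_iff_isOneLipschitzRetract {n : ℕ} {S : Set (Fin n → ℝ)} :
    IsInjectiveSubset S ↔ IsOneLipschitzRetract S :=
  ⟨IsInjectiveMetricSpace.isOneLipschitzRetract, IsOneLipschitzRetract.isInjectiveMetricSpace⟩

theorem isOneLipschitzRetract_closedBall_pi {ι : Type*} [Fintype ι] (x : ι → ℝ) {ρ : ℝ}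
    (hρ : 0 ≤ ρ) : IsOneLipschitzRetract (closedBall x ρ) := by
  have hle : ∀ i, x i - ρ ≤ x i + ρ := fun i => by linarith
  have hball : closedBall x ρ = univ.pi fun i => Icc (x i - ρ) (x i + ρ) := by
    simp only [closedBall_pi x hρ, Real.closedBall_eq_Icc]
  refine ⟨fun y i => projIcc _ _ (hle i) (y i), ?_, fun y => ?_, fun z hz => ?_⟩
  · refine LipschitzWith.of_dist_le_mul fun y z => (dist_pi_le_iff (by positivity)).2 fun i => ?_
    calc dist (projIcc _ _ (hle i) (y i) : ℝ) (projIcc _ _ (hle i) (z i))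
        ≤ dist (y i) (z i) :=
          (LipschitzWith.projIcc (hle i)).dist_le_mul (y i) (z i) |>.trans_eq (one_mul _)
      _ ≤ 1 * dist y z := by simpa using dist_le_pi_dist y z i
  · rw [hball]
    exact fun i _ => (projIcc _ _ (hle i) (y i)).2
  · rw [hball] at hz
    funext i
    simp [projIcc_of_mem (hle i) (hz i (mem_univ i))]

theorem exists_lipschitzWith_tendsto_of_ultrafilter {ι α β : Type*} [PseudoMetricSpace α]
    [PseudoMetricSpace β] [ProperSpace β] {K : NNReal} (U : Ultrafilter ι) (f : ι → α → β)
    (hf : ∀ i, LipschitzWith K (f i)) (a : α) (c : β) (R : ℝ)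
    (hbdd : ∀ i, f i a ∈ closedBall c R) :
    ∃ g : α → β, LipschitzWith K g ∧ ∀ x, Tendsto (fun i => f i x) U (𝓝 (g x)) := by
  have hlim : ∀ x, ∃ y, Tendsto (fun i => f i x) U (𝓝 y) := fun x => by
    have hmem : ∀ i, f i x ∈ closedBall c (R + K * dist x a) := fun i =>
      calc dist (f i x) c ≤ dist (f i x) (f i a) + dist (f i a) c := dist_triangle _ _ _
        _ ≤ K * dist x a + R := add_le_add ((hf i).dist_le_mul x a) (hbdd i)
        _ = R + K * dist x a := add_comm _ _
    obtain ⟨y, -, hy⟩ := (isCompact_closedBall c (R + K * dist x a)).ultrafilter_le_nhds'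
      (U.map fun i => f i x) (Ultrafilter.mem_map.2 (univ_mem' hmem))
    exact ⟨y, hy⟩
  choose g hg using hlim
  refine ⟨g, LipschitzWith.of_dist_le_mul fun x y => ?_, hg⟩
  exact le_of_tendsto ((hg x).dist (hg y)) (Eventually.of_forall fun i => (hf i).dist_le_mul x y)

theorem IsOneLipschitzRetract.iUnion_of_monotone {E : Type*} [MetricSpace E] [ProperSpace E]
    {X : ℕ → Set E} (hX : Monotone X) (hret : ∀ m, IsOneLipschitzRetract (X m))
    (hcl : IsClosed (⋃ m, X m)) : IsOneLipschitzRetract (⋃ m, X m) := by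
  rcases isEmpty_or_nonempty E with _ | ⟨⟨y⟩⟩
  · exact ⟨id, LipschitzWith.id, isEmptyElim, fun x => isEmptyElim x⟩
  choose r hr hrX hrfix using hret
  set x₀ := r 0 y
  have hx₀ : ∀ m, r m x₀ = x₀ := fun m => hrfix m x₀ (hX (Nat.zero_le m) (hrX 0 y))
  set U := Ultrafilter.of (atTop : Filter ℕ)
  obtain ⟨R, hRlip, hR⟩ := exists_lipschitzWith_tendsto_of_ultrafilter U r hr x₀ x₀ 0
    (fun m => by simp [hx₀ m])
  refine ⟨R, hRlip, fun z => ?_, fun x hx => ?_⟩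
  · exact hcl.mem_of_tendsto (hR z) (Eventually.of_forall fun m => mem_iUnion_of_mem m (hrX m z))
  · obtain ⟨k, hk⟩ := mem_iUnion.1 hx
    have hev : ∀ᶠ m in (U : Filter ℕ), r m x = x :=
      Ultrafilter.of_le _ ((eventually_ge_atTop k).mono fun m hm => hrfix m x (hX hm hk))
    exact tendsto_nhds_unique (hR x) (tendsto_const_nhds.congr' (hev.mono fun _ h => h.symm))

theorem iUnion_closedBall_nat_succ {E : Type*} [PseudoMetricSpace E] (x : E) :
    ⋃ m : ℕ, closedBall x (m + 1) = univ :=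
  iUnion_eq_univ_iff.2 fun y => (exists_nat_ge (dist y x)).imp fun _ hm => hm.trans (by linarith)

/-- For a nonempty closed subset `S ⊆ l∞ⁿ`, the following are equivalent: (i) `S` is
injective; (ii) there is `x ∈ S` such that `S ∩ B(x,r)` is injective for every `r > 0`;
(iii) `S` is the union of an increasing sequence of injective subsets. -/
theorem closed_injective_tfae {n : ℕ} (S : Set (Fin n → ℝ)) (hne : S.Nonempty)
    (hcl : IsClosed S) :
    (IsInjectiveSubset S ↔
        ∃ x ∈ S, ∀ r : ℝ, 0 < r → IsInjectiveSubset (S ∩ closedBall x r)) ∧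
      (IsInjectiveSubset S ↔
        ∃ X : ℕ → Set (Fin n → ℝ), (∀ m, X m ⊆ S) ∧ (∀ m, X m ⊆ X (m + 1)) ∧
          (∀ m, IsInjectiveSubset (X m)) ∧ S = ⋃ m, X m) := by
  simp only [isInjectiveSubset_iff_isOneLipschitzRetract]
  obtain ⟨x, hx⟩ := hne
  have h12 (h : IsOneLipschitzRetract S) :
      ∃ x ∈ S, ∀ r : ℝ, 0 < r → IsOneLipschitzRetract (S ∩ closedBall x r) :=
    ⟨x, hx, fun ρ hρ => h.inter_closedBall hx (isOneLipschitzRetract_closedBall_pi x hρ.le)⟩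
  have h23 : (∃ x ∈ S, ∀ r : ℝ, 0 < r → IsOneLipschitzRetract (S ∩ closedBall x r)) →
      ∃ X : ℕ → Set (Fin n → ℝ), (∀ m, X m ⊆ S) ∧ (∀ m, X m ⊆ X (m + 1)) ∧
        (∀ m, IsOneLipschitzRetract (X m)) ∧ S = ⋃ m, X m := by
    rintro ⟨c, -, hball⟩
    refine ⟨fun m => S ∩ closedBall c (m + 1), fun m => inter_subset_left,
      fun m => inter_subset_inter_right _ (closedBall_subset_closedBall (by push_cast; linarith)),
      fun m => hball _ (by positivity), ?_⟩
    rw [← inter_iUnion, iUnion_closedBall_nat_succ, inter_univ]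
  have h31 : (∃ X : ℕ → Set (Fin n → ℝ), (∀ m, X m ⊆ S) ∧ (∀ m, X m ⊆ X (m + 1)) ∧
      (∀ m, IsOneLipschitzRetract (X m)) ∧ S = ⋃ m, X m) → IsOneLipschitzRetract S := by
    rintro ⟨X, -, hmono, hret, rfl⟩
    exact IsOneLipschitzRetract.iUnion_of_monotone (monotone_nat_of_le_succ hmono) hret hcl
  exact ⟨⟨h12, h31 ∘ h23⟩, ⟨h23 ∘ h12, h31⟩⟩
end

section
/- Let C ⊂ l∞^n be an injective convex polyhedral cone with nonempty interior such that for every facet F of the cube [−1,1]^n with relint(F) ∩ C ≠ ∅, one also has relint(−F) ∩ C ≠ ∅. Then C = ℝ^n. -/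
open Set Metric

/-- `C` is a cone: it is stable under multiplication by nonnegative scalars. -/
def IsCone {n : ℕ} (C : Set (Fin n → ℝ)) : Prop :=
  ∀ x ∈ C, ∀ t : ℝ, 0 ≤ t → t • x ∈ C

/-- The facet `{x ∈ [-1,1]ⁿ : x j = τ}` (for `τ = ±1`) of the cube `[-1,1]ⁿ`; every facet
of the cube is of this form. -/
def cubeFacet {n : ℕ} (j : Fin n) (τ : ℝ) : Set (Fin n → ℝ) :=
  {x | x j = τ ∧ ∀ i, -1 ≤ x i ∧ x i ≤ 1}

def GoodPt {n : ℕ} (C : Set (Fin n → ℝ)) (j : Fin n) (s : ℝ) : Prop :=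
  ∃ u ∈ C, u j = s ∧ ∀ i, i ≠ j → |u i| < 1

noncomputable def coordHyperplane (n : ℕ) (j : Fin n) (s : ℝ) :
    AffineSubspace ℝ (Fin n → ℝ) where
  carrier := {x | x j = s}
  smul_vsub_vadd_mem' := by
    intro c p₁ p₂ p₃ h₁ h₂ h₃
    simp only [Set.mem_setOf_eq] at *
    simp [vsub_eq_sub, vadd_eq_add, h₁, h₂, h₃]

lemma span_facet_le {n : ℕ} (j : Fin n) (s : ℝ) :
    affineSpan ℝ (cubeFacet j s) ≤ coordHyperplane n j s :=
  affineSpan_le.mpr (fun _ hx => hx.1)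

/-- A strict-max bound for the off-`j` coordinates of `u`. -/
lemma exists_offbound {n : ℕ} (j : Fin n) (u : Fin n → ℝ)
    (hui : ∀ i, i ≠ j → |u i| < 1) :
    ∃ β : ℝ, 0 ≤ β ∧ β < 1 ∧ ∀ i, i ≠ j → |u i| ≤ β := by
  classical
  obtain ⟨i₀, -, hmax⟩ := Finset.exists_max_image Finset.univ
    (fun i => if i = j then 0 else |u i|) ⟨j, Finset.mem_univ j⟩
  refine ⟨if i₀ = j then 0 else |u i₀|, ?_, ?_, ?_⟩
  · by_cases h : i₀ = j <;> simp [h]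
  · by_cases h : i₀ = j <;> simp [h]
    exact hui i₀ h
  · intro i hij
    have h := hmax i (Finset.mem_univ i)
    simpa [hij] using h

lemma goodPt_relint {n : ℕ} {C : Set (Fin n → ℝ)} {j : Fin n} {s : ℝ}
    (hs : s = 1 ∨ s = -1) (h : GoodPt C j s) :
    (intrinsicInterior ℝ (cubeFacet j s) ∩ C).Nonempty := by
  classical
  obtain ⟨u, huC, huj, hui⟩ := h
  have hsb : -1 ≤ s ∧ s ≤ 1 := by rcases hs with h' | h' <;> rw [h'] <;> norm_num
  have huF : u ∈ cubeFacet j s := by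
    refine ⟨huj, fun i => ?_⟩
    by_cases hij : i = j
    · subst hij; rw [huj]; exact hsb
    · have := abs_lt.mp (hui i hij); exact ⟨this.1.le, this.2.le⟩
  refine ⟨u, ?_, huC⟩
  rw [mem_intrinsicInterior]
  refine ⟨⟨u, subset_affineSpan ℝ _ huF⟩, ?_, rfl⟩
  obtain ⟨β, hβ0, hβ1, hβi⟩ := exists_offbound j u hui
  rw [mem_interior]
  refine ⟨Subtype.val ⁻¹' (ball u (1 - β)), ?_, isOpen_ball.preimage continuous_subtype_val, ?_⟩
  · intro y hy
    have hyj : (y : Fin n → ℝ) j = s := span_facet_le j s y.2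
    refine ⟨hyj, fun i => ?_⟩
    by_cases hij : i = j
    · subst hij; rw [hyj]; exact hsb
    · have hd : dist ((y : Fin n → ℝ) i) (u i) ≤ dist (y : Fin n → ℝ) u :=
        dist_le_pi_dist _ _ i
      have hlt : dist (y : Fin n → ℝ) u < 1 - β := hy
      rw [Real.dist_eq] at hd
      have h1 := abs_le.mp (le_of_lt (lt_of_le_of_lt hd hlt))
      have h2 := abs_le.mp (hβi i hij)
      constructor <;> [linarith [h1.1, h2.1]; linarith [h1.2, h2.2]]
  · show u ∈ ball u (1 - β)
    simp [mem_ball, hβ1]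

lemma relint_goodPt {n : ℕ} {C : Set (Fin n → ℝ)} {j : Fin n} {s : ℝ}
    (hs : s = 1 ∨ s = -1)
    (h : (intrinsicInterior ℝ (cubeFacet j s) ∩ C).Nonempty) : GoodPt C j s := by
  classical
  obtain ⟨x, hxI, hxC⟩ := h
  have hxF : x ∈ cubeFacet j s := intrinsicInterior_subset hxI
  have hsb : -1 ≤ s ∧ s ≤ 1 := by rcases hs with h' | h' <;> rw [h'] <;> norm_num
  refine ⟨x, hxC, hxF.1, fun i hij => ?_⟩
  by_contra hge
  push_neg at hge
  have hxb := hxF.2 i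
  have habs1 : |x i| = 1 := le_antisymm (abs_le.mpr hxb) hge
  set σ : ℝ := x i with hσdef
  have hσ : σ = 1 ∨ σ = -1 := (abs_eq (by norm_num)).mp habs1
  obtain ⟨y, hy, hyx⟩ := mem_intrinsicInterior.mp hxI
  obtain ⟨ε, hε, hball⟩ := Metric.mem_nhds_iff.mp (mem_interior_iff_mem_nhds.mp hy)
  set p₁ : Fin n → ℝ := fun k => if k = j then s else if k = i then 1 else 0 with hp₁
  set p₂ : Fin n → ℝ := fun k => if k = j then s else if k = i then -1 else 0 with hp₂
  have hp₁F : p₁ ∈ cubeFacet j s := by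
    constructor
    · simp [hp₁]
    · intro k
      by_cases hk : k = j
      · simpa [hp₁, hk] using hsb
      · by_cases hk' : k = i <;> simp [hp₁, hk, hk', hij] <;> norm_num
  have hp₂F : p₂ ∈ cubeFacet j s := by
    constructor
    · simp [hp₂]
    · intro k
      by_cases hk : k = j
      · simpa [hp₂, hk] using hsb
      · by_cases hk' : k = i <;> simp [hp₂, hk, hk', hij] <;> norm_num
  have hdir : p₁ -ᵥ p₂ ∈ (affineSpan ℝ (cubeFacet j s)).direction :=
    AffineSubspace.vsub_mem_direction (subset_affineSpan ℝ _ hp₁F) (subset_affineSpan ℝ _ hp₂F)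
  have hdir2 : (ε/4*σ) • (p₁ - p₂) ∈ (affineSpan ℝ (cubeFacet j s)).direction := by
    simpa [vsub_eq_sub] using Submodule.smul_mem _ (ε/4*σ) hdir
  set d : Fin n → ℝ := (ε/4*σ) • (p₁ - p₂) with hd
  have hdapp : ∀ k, d k = (ε/4*σ) * (p₁ k - p₂ k) := by
    intro k; simp [hd, smul_eq_mul]
  have hdk : ∀ k, d k = if k = i then ε/2*σ else 0 := by
    intro k
    by_cases hk : k = i
    · have hkj : ¬ k = j := by rw [hk]; exact hij
      have h2 : p₁ k - p₂ k = 2 := by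
        simp only [hp₁, hp₂, if_neg hkj, if_pos hk]
        norm_num
      rw [if_pos hk, hdapp k, h2]; ring
    · rw [if_neg hk, hdapp k]
      by_cases hkj : k = j
      · simp only [hp₁, hp₂, if_pos hkj]; ring
      · simp only [hp₁, hp₂, if_neg hkj, if_neg hk]; ring
  have hxspan : x ∈ affineSpan ℝ (cubeFacet j s) := hyx ▸ y.2
  have hmem : d +ᵥ x ∈ affineSpan ℝ (cubeFacet j s) :=
    AffineSubspace.vadd_mem_of_mem_direction hdir2 hxspan
  set y' : ↥(affineSpan ℝ (cubeFacet j s)) := ⟨d +ᵥ x, hmem⟩ with hy'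
  have hcoe : (y' : Fin n → ℝ) = d + x := by simp [hy', vadd_eq_add]
  have hσabs : |σ| = 1 := by rcases hσ with h' | h' <;> rw [h'] <;> norm_num
  have hyball : y' ∈ ball y ε := by
    rw [mem_ball, Subtype.dist_eq, hcoe, hyx]
    have hle : dist (d + x) x ≤ ε/2 := by
      rw [dist_pi_le_iff (by positivity)]
      intro k
      rw [Real.dist_eq]
      simp only [Pi.add_apply, add_sub_cancel_right]
      rw [hdk k]
      by_cases hk : k = i
      · rw [if_pos hk, abs_mul, hσabs, mul_one, abs_of_nonneg (by positivity : (0:ℝ) ≤ ε/2)]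
      · rw [if_neg hk]; simp; positivity
    linarith
  have hF : (d + x) ∈ cubeFacet j s := by
    have := hball hyball
    rwa [Set.mem_preimage, hcoe] at this
  have hbnd := hF.2 i
  have hdi : d i = ε/2*σ := by rw [hdk i, if_pos rfl]
  have hxi : x i = σ := rfl
  rcases hσ with h' | h'
  · have : d i + x i = 1 + ε/2 := by rw [hdi, hxi, h']; ring
    rw [Pi.add_apply] at hbnd
    rw [this] at hbnd
    linarith [hbnd.2]
  · have : d i + x i = -1 - ε/2 := by rw [hdi, hxi, h']; ring
    rw [Pi.add_apply] at hbnd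
    rw [this] at hbnd
    linarith [hbnd.1]

lemma pin_aux {n : ℕ} {C : Set (Fin n → ℝ)} (hcone : IsCone C)
    (q : Fin n → ℝ) {j : Fin n} {s : ℝ} (hs : s = 1 ∨ s = -1) {u : Fin n → ℝ}
    (huC : u ∈ C) (huj : u j = s) (hui : ∀ i, i ≠ j → |u i| < 1) :
    ∃ T : ℝ, ∃ p ∈ C, p j = s * T ∧ 0 ≤ T - s * q j ∧ dist q p ≤ T - s * q j := by
  obtain ⟨β, hβ0, hβ1, hβi⟩ := exists_offbound j u hui
  set M := ‖q‖ with hM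
  have hM0 : 0 ≤ M := norm_nonneg q
  have hMq : ∀ i, |q i| ≤ M := by
    intro i
    simpa [Real.norm_eq_abs] using norm_le_pi_norm q i
  have hsq : |s * q j| ≤ M := by
    have h := hMq j
    have : |s * q j| = |q j| := by rcases hs with h' | h' <;> rw [h'] <;> simp
    rw [this]; exact h
  have h1β : 0 < 1 - β := by linarith
  set T := 2*M/(1-β) + M + 1 with hT
  have hT2M : 2*M ≤ T*(1-β) := by
    have key : (2*M/(1-β)) * (1-β) = 2*M := div_mul_cancel₀ _ (ne_of_gt h1β)
    rw [hT]; nlinarith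
  have hTM : M + 1 ≤ T := by
    have h : 0 ≤ 2*M/(1-β) := by positivity
    rw [hT]; linarith
  have hT0 : 0 ≤ T := by linarith
  have hD0 : 0 ≤ T - s * q j := by
    have := abs_le.mp hsq
    linarith [this.2]
  refine ⟨T, T • u, hcone u huC T hT0, by simp [huj]; ring, hD0, ?_⟩
  rw [dist_pi_le_iff hD0]
  intro i
  rw [Real.dist_eq]
  by_cases hij : i = j
  · subst hij
    have hpj : (T • u) i = s * T := by simp [huj]; ring
    rw [hpj]
    have hss : s * s = 1 := by rcases hs with h' | h' <;> rw [h'] <;> norm_num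
    have habs : |q i - s * T| = |s * q i - T| := by
      have : q i - s * T = s * (s * q i - T) := by
        have : s * (s * q i) = q i := by rw [← mul_assoc, hss, one_mul]
        linarith [this]
      rw [this, abs_mul]
      rcases hs with h' | h' <;> rw [h'] <;> simp
    rw [habs, abs_sub_comm, abs_of_nonneg (by linarith [abs_le.mp hsq] : 0 ≤ T - s * q i)]
  · have hpi : |(T • u) i| ≤ T * β := by
      have : |(T • u) i| = T * |u i| := by
        simp [abs_mul, abs_of_nonneg hT0]
      rw [this]
      exact mul_le_mul_of_nonneg_left (hβi i hij) hT0
    have habs : |q i - (T • u) i| ≤ M + T*β := by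
      have h1 : |q i - (T • u) i| ≤ |q i| + |(T • u) i| := by
        have := abs_add_le (q i) (-(T • u) i)
        simpa [sub_eq_add_neg, abs_neg] using this
      exact le_trans h1 (add_le_add (hMq i) hpi)
    have h2 : M + T*β ≤ T - s * q j := by
      have := abs_le.mp hsq
      nlinarith
    linarith

/-- If an injective convex polyhedral cone `C ⊆ l∞ⁿ` with nonempty interior meets the
relative interior of the facet `-F` of the cube whenever it meets the relative interior
of the facet `F`, then `C = ℝⁿ`. -/
theorem symmetric_injective_cone_eq_univ {n : ℕ} (C : Set (Fin n → ℝ))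
    (hC : IsConvexPolyhedron C) (hcone : IsCone C) (hint : (interior C).Nonempty)
    (hinj : IsInjectiveSubset C)
    (hsym : ∀ (j : Fin n) (τ : ℝ), τ = 1 ∨ τ = -1 →
      (intrinsicInterior ℝ (cubeFacet j τ) ∩ C).Nonempty →
      (intrinsicInterior ℝ (cubeFacet j (-τ)) ∩ C).Nonempty) :
    C = univ := by
  classical
  -- convexity of C
  have hconv : Convex ℝ C := by
    obtain ⟨m, ν, c, hν, hCeq⟩ := hC
    rw [hCeq]
    refine convex_iInter fun i => ?_
    have hlin : IsLinearMap ℝ (fun x : Fin n → ℝ => ∑ j, ν i j * x j) := by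
      constructor
      · intro x y; simp [mul_add, Finset.sum_add_distrib]
      · intro t x
        simp only [Pi.smul_apply, smul_eq_mul, Finset.mul_sum]
        exact Finset.sum_congr rfl fun j _ => by ring
    exact convex_halfSpace_ge hlin (c i)
  obtain ⟨y₀, hy₀⟩ := hint
  have hy₀C : y₀ ∈ C := interior_subset hy₀
  have h0C : (0 : Fin n → ℝ) ∈ C := by
    have := hcone y₀ hy₀C 0 le_rfl
    simpa using this
  have haddC : ∀ x ∈ C, ∀ y ∈ C, x + y ∈ C := by
    intro x hx y hy
    have hm : (1/2 : ℝ) • x + (1/2 : ℝ) • y ∈ C :=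
      hconv hx hy (by norm_num) (by norm_num) (by norm_num)
    have h2 := hcone _ hm 2 (by norm_num)
    have : (2:ℝ) • ((1/2 : ℝ) • x + (1/2 : ℝ) • y) = x + y := by
      rw [smul_add, smul_smul, smul_smul]; norm_num
    rwa [this] at h2
  -- the 1-Lipschitz retraction
  obtain ⟨g, hg, hgr⟩ := hinj ↥C (Fin n → ℝ) Subtype.val id isometry_subtype_coe LipschitzWith.id
  have hgd : ∀ (q p : Fin n → ℝ), p ∈ C → dist ((g q : Fin n → ℝ)) p ≤ dist q p := by
    intro q p hp
    have h1 : dist (g q) (g p) ≤ dist q p := by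
      have := hg.dist_le_mul q p
      simpa using this
    have h2 : g p = ⟨p, hp⟩ := hgr ⟨p, hp⟩
    rw [h2] at h1
    rw [Subtype.dist_eq] at h1
    exact h1
  -- symmetry of GoodPt via hsym
  have hGsym : ∀ (j : Fin n) (s : ℝ), s = 1 ∨ s = -1 → GoodPt C j s → GoodPt C j (-s) := by
    intro j s hs h
    have hs' : -s = 1 ∨ -s = -1 := by rcases hs with h' | h' <;> rw [h'] <;> norm_num
    exact relint_goodPt hs' (hsym j s hs (goodPt_relint hs h))
  by_cases hAll : ∀ (j : Fin n) (s : ℝ), s = 1 ∨ s = -1 → GoodPt C j s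
  · -- every point is "surrounded": C = univ
    ext q
    simp only [mem_univ, iff_true]
    have hfix : (g q : Fin n → ℝ) = q := by
      funext j
      have hup : q j ≤ (g q : Fin n → ℝ) j := by
        obtain ⟨u, huC, huj, hui⟩ := hAll j 1 (Or.inl rfl)
        obtain ⟨T, p, hpC, hpj, hD0, hqp⟩ := pin_aux hcone q (Or.inl rfl) huC huj hui
        have h1 : dist ((g q : Fin n → ℝ)) p ≤ T - 1 * q j := le_trans (hgd q p hpC) hqp
        have h2 : |(g q : Fin n → ℝ) j - p j| ≤ T - 1 * q j := by
          have := dist_le_pi_dist ((g q : Fin n → ℝ)) p j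
          rw [Real.dist_eq] at this
          exact le_trans this h1
        have h3 := (abs_le.mp h2).1
        rw [hpj] at h3
        simp only [one_mul] at h3 ⊢
        linarith
      have hdn : (g q : Fin n → ℝ) j ≤ q j := by
        obtain ⟨u, huC, huj, hui⟩ := hAll j (-1) (Or.inr rfl)
        obtain ⟨T, p, hpC, hpj, hD0, hqp⟩ := pin_aux hcone q (Or.inr rfl) huC huj hui
        have h1 : dist ((g q : Fin n → ℝ)) p ≤ T - (-1) * q j := le_trans (hgd q p hpC) hqp
        have h2 : |(g q : Fin n → ℝ) j - p j| ≤ T - (-1) * q j := by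
          have := dist_le_pi_dist ((g q : Fin n → ℝ)) p j
          rw [Real.dist_eq] at this
          exact le_trans this h1
        have h3 := (abs_le.mp h2).2
        rw [hpj] at h3
        have h4 : (g q : Fin n → ℝ) j ≤ -T + (T + q j) := by linarith
        linarith
      linarith
    have : q ∈ C := hfix ▸ (g q).2
    exact this
  · -- there is a bad coordinate
    push_neg at hAll
    obtain ⟨j₀, s₀, hs₀, hbad₀⟩ := hAll
    set Bad : Fin n → Prop := fun j => ¬ GoodPt C j 1 ∧ ¬ GoodPt C j (-1) with hBad
    have hbadsym : ∀ (j : Fin n) (s : ℝ), s = 1 ∨ s = -1 → ¬ GoodPt C j s → Bad j := by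
      intro j s hs h
      rcases hs with h' | h'
      · subst h'
        refine ⟨h, fun hgood => h ?_⟩
        have := hGsym j (-1) (Or.inr rfl) hgood
        simpa using this
      · subst h'
        refine ⟨fun hgood => h ?_, h⟩
        exact hGsym j 1 (Or.inl rfl) hgood
    have hBadj₀ : Bad j₀ := hbadsym j₀ s₀ hs₀ hbad₀
    have hGoodOfNotBad : ∀ j, ¬ Bad j → (GoodPt C j 1 ∧ GoodPt C j (-1)) := by
      intro j h
      by_cases h1 : GoodPt C j 1
      · refine ⟨h1, ?_⟩
        exact hGsym j 1 (Or.inl rfl) h1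
      · exact absurd (hbadsym j 1 (Or.inl rfl) h1) h
    -- bump lemma
    have hbump : ∀ z, z ∈ interior C → (∀ i, ¬ Bad i → z i = 0) → z = 0 := by
      intro z hz hz0
      by_contra hzne
      obtain ⟨k, -, hk⟩ := Finset.exists_max_image Finset.univ (fun i => |z i|)
        ⟨j₀, Finset.mem_univ j₀⟩
      have hzex : ∃ i, z i ≠ 0 := by
        by_contra h'
        push_neg at h'
        exact hzne (funext h')
      obtain ⟨i₁, hi₁⟩ := hzex
      have hc0 : 0 < |z k| := lt_of_lt_of_le (abs_pos.mpr hi₁) (hk i₁ (Finset.mem_univ i₁))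
      have hkBad : Bad k := by
        by_contra h'
        rw [hz0 k h'] at hc0
        simp at hc0
      obtain ⟨ε, hε, hball⟩ := Metric.isOpen_iff.mp isOpen_interior z hz
      set σ : ℝ := if 0 ≤ z k then 1 else -1 with hσdef
      set w : Fin n → ℝ := z + (ε/2 * σ) • (fun m => if m = k then (1:ℝ) else 0) with hw
      have hwz : ∀ m, w m = if m = k then z k + ε/2*σ else z m := by
        intro m
        by_cases hm : m = k
        · subst hm; simp [hw]
        · simp [hw, hm]
      have hσabs : |σ| = 1 := by rw [hσdef]; split <;> norm_num
      have hwC : w ∈ C := by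
        refine interior_subset (hball ?_)
        rw [mem_ball]
        have hle : dist w z ≤ ε/2 := by
          rw [dist_pi_le_iff (by positivity)]
          intro m
          rw [Real.dist_eq, hwz m]
          by_cases hm : m = k
          · rw [if_pos hm, hm]
            have : z k + ε/2*σ - z k = ε/2*σ := by ring
            rw [this, abs_mul, hσabs, mul_one, abs_of_nonneg (by positivity)]
          · rw [if_neg hm]; simp; positivity
        linarith
      have hwk : |w k| = |z k| + ε/2 := by
        rw [hwz k, if_pos rfl, hσdef]
        by_cases h' : 0 ≤ z k
        · rw [if_pos h', abs_of_nonneg h', abs_of_nonneg (by positivity)]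
          ring
        · push_neg at h'
          rw [if_neg (not_le.mpr h'), abs_of_neg h']
          rw [abs_of_neg (by linarith)]
          ring
      have hwk0 : 0 < |w k| := by rw [hwk]; linarith
      have hwi : ∀ i, i ≠ k → |w i| < |w k| := by
        intro i hik
        rw [hwz i, if_neg hik, hwk]
        exact lt_of_le_of_lt (hk i (Finset.mem_univ i)) (by linarith)
      have hwkval : w k = z k + ε/2*σ := by rw [hwz k, if_pos rfl]
      have hwkσ : w k = σ * |w k| := by
        by_cases h' : 0 ≤ z k
        · have hσ1 : σ = 1 := by rw [hσdef, if_pos h']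
          rw [hσ1, one_mul]
          refine (abs_of_nonneg ?_).symm
          rw [hwkval, hσ1]
          linarith
        · push_neg at h'
          have hσ1 : σ = -1 := by rw [hσdef, if_neg (not_le.mpr h')]
          have hwneg : w k < 0 := by
            rw [hwkval, hσ1]
            linarith
          rw [hσ1, abs_of_neg hwneg]
          ring
      set v : Fin n → ℝ := (|w k|)⁻¹ • w with hv
      have hvC : v ∈ C := hcone w hwC _ (by positivity)
      have hvk : v k = σ := by
        rw [hv]
        simp only [Pi.smul_apply, smul_eq_mul]
        rw [show (|w k|)⁻¹ * w k = (|w k|)⁻¹ * (σ * |w k|) from by rw [← hwkσ]]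
        calc |w k|⁻¹ * (σ * |w k|) = σ * (|w k|⁻¹ * |w k|) := by ring
          _ = σ := by rw [inv_mul_cancel₀ (ne_of_gt hwk0), mul_one]
      have hσpm : σ = 1 ∨ σ = -1 := by
        rw [hσdef]; split
        · exact Or.inl rfl
        · exact Or.inr rfl
      have hGoodk : GoodPt C k σ := by
        refine ⟨v, hvC, hvk, fun i hik => ?_⟩
        have hvi : |v i| = |w i| / |w k| := by
          rw [hv]
          simp only [Pi.smul_apply, smul_eq_mul, abs_mul, abs_inv, abs_abs]
          rw [inv_mul_eq_div]
        rw [hvi]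
        rw [div_lt_one hwk0]
        exact hwi i hik
      rcases hσpm with h' | h'
      · exact hkBad.1 (h' ▸ hGoodk)
      · exact hkBad.2 (h' ▸ hGoodk)
    -- main dichotomy
    by_cases hzint : (0 : Fin n → ℝ) ∈ interior C
    · -- 0 interior: C is everything
      ext x
      simp only [mem_univ, iff_true]
      obtain ⟨ε, hε, hball⟩ := Metric.isOpen_iff.mp isOpen_interior 0 hzint
      by_cases hx0 : x = 0
      · exact hx0 ▸ h0C
      · have hnx : 0 < ‖x‖ := norm_pos_iff.mpr hx0
        set r : ℝ := ε / (2*‖x‖) with hr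
        have hr0 : 0 < r := by positivity
        have hrx : r • x ∈ C := by
          refine interior_subset (hball ?_)
          rw [mem_ball, dist_zero_right, norm_smul, Real.norm_eq_abs, abs_of_pos hr0]
          have heq : r * ‖x‖ = ε/2 := by
            rw [hr]
            field_simp [ne_of_gt hnx]
          rw [heq]
          linarith
        have h2 := hcone _ hrx r⁻¹ (le_of_lt (inv_pos.mpr hr0))
        rw [smul_smul, inv_mul_cancel₀ (ne_of_gt hr0), one_smul] at h2
        exact h2
    · -- separate C from -(interior C) + V₀
      set V₀ : Set (Fin n → ℝ) := {v | ∀ i, ¬ Bad i → v i = 0} with hV₀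
      set A : Set (Fin n → ℝ) := {x | ∃ p ∈ interior C, ∃ v ∈ V₀, x = -p + v} with hA
      have haddint : ∀ x ∈ C, ∀ p ∈ interior C, x + p ∈ interior C := by
        intro x hx p hp
        have hopen : IsOpen ((x + ·) '' interior C) :=
          (isOpenMap_add_left x) _ isOpen_interior
        have hsub : ((x + ·) '' interior C) ⊆ C := by
          rintro - ⟨z, hz, rfl⟩
          exact haddC x hx z (interior_subset hz)
        exact interior_maximal hsub hopen ⟨p, hp, rfl⟩
      have hdisj : Disjoint A C := by
        rw [Set.disjoint_left]
        rintro x ⟨p, hp, v, hv, rfl⟩ hxC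
        have hzin : v ∈ interior C := by
          have heq : (-p + v) + p = v := by abel
          have := haddint _ hxC p hp
          rwa [heq] at this
        have hv0 : v = 0 := hbump v hzin (fun i hi => hv i hi)
        exact hzint (hv0 ▸ hzin)
      have hAconv : Convex ℝ A := by
        rintro x₁ ⟨p₁, hp₁, v₁, hv₁, rfl⟩ x₂ ⟨p₂, hp₂, v₂, hv₂, rfl⟩ a b ha hb hab
        refine ⟨a • p₁ + b • p₂, hconv.interior hp₁ hp₂ ha hb hab,
          a • v₁ + b • v₂, ?_, ?_⟩
        · intro i hi
          simp only [Pi.add_apply, Pi.smul_apply, smul_eq_mul, hv₁ i hi, hv₂ i hi]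
          ring
        · module
      have hAopen : IsOpen A := by
        rw [Metric.isOpen_iff]
        rintro x ⟨p, hp, v, hv, rfl⟩
        obtain ⟨ε, hε, hball⟩ := Metric.isOpen_iff.mp isOpen_interior p hp
        refine ⟨ε, hε, ?_⟩
        intro y hy
        refine ⟨p - (y - (-p + v)), hball ?_, v, hv, by abel⟩
        rw [mem_ball, dist_eq_norm]
        have heq : p - (y - (-p + v)) - p = -(y - (-p + v)) := by abel
        rw [heq, norm_neg, ← dist_eq_norm]
        exact hy
      obtain ⟨f, c₀, hfA, hfC⟩ := geometric_hahn_banach_open hAconv hAopen hconv hdisj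
      have hc₀ : c₀ ≤ 0 := by simpa using hfC 0 h0C
      have hfC0 : ∀ x ∈ C, 0 ≤ f x := by
        intro x hx
        by_contra h'
        push_neg at h'
        have ht : 0 < (c₀ - 1)/(f x) := div_pos_of_neg_of_neg (by linarith) h'
        have h2 := hfC _ (hcone x hx _ ht.le)
        rw [map_smul, smul_eq_mul, div_mul_cancel₀ _ (ne_of_lt h')] at h2
        linarith
      have hfV : ∀ v ∈ V₀, f v = 0 := by
        intro v hv
        by_contra hfv
        have hmem : ∀ t : ℝ, (-y₀ + t • v) ∈ A := by
          intro t
          refine ⟨y₀, hy₀, t • v, ?_, rfl⟩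
          intro i hi
          simp only [Pi.smul_apply, smul_eq_mul, hv i hi, mul_zero]
        have hlt : ∀ t : ℝ, f (-y₀) + t * f v < c₀ := by
          intro t
          have := hfA _ (hmem t)
          rwa [map_add, map_smul, smul_eq_mul] at this
        have h2 := hlt ((c₀ - f (-y₀))/(f v))
        rw [div_mul_cancel₀ _ hfv] at h2
        linarith
      set lam : Fin n → ℝ := fun i => f (fun j => if i = j then 1 else 0) with hlam
      have hfrep : ∀ x : Fin n → ℝ, f x = ∑ i, x i * lam i := by
        intro x
        conv_lhs => rw [pi_eq_sum_univ x]
        rw [map_sum]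
        exact Finset.sum_congr rfl fun i _ => by rw [map_smul, smul_eq_mul]
      have hlamBad : ∀ j, Bad j → lam j = 0 := by
        intro j hj
        apply hfV
        intro i hi
        have hne : ¬ (j = i) := fun h' => hi (h' ▸ hj)
        simp [hne]
      have hfy₀ : 0 < f y₀ := by
        have h1 : f (-y₀) < c₀ := hfA (-y₀) ⟨y₀, hy₀, 0, fun i _ => rfl, by abel⟩
        rw [map_neg] at h1
        linarith
      have hlamne : ∃ j, lam j ≠ 0 := by
        by_contra h'
        push_neg at h'
        rw [hfrep y₀] at hfy₀
        simp [h'] at hfy₀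
      obtain ⟨j₁, hj₁⟩ := hlamne
      -- facet points opposite to the sign of lam
      have hWex : ∀ j : Fin n, ∃ w : Fin n → ℝ, lam j ≠ 0 →
          (w ∈ C ∧ w j = (if 0 < lam j then (-1:ℝ) else 1) ∧ ∀ i, i ≠ j → |w i| < 1) := by
        intro j
        by_cases hj : lam j = 0
        · exact ⟨0, fun h' => absurd hj h'⟩
        · have hnb : ¬ Bad j := fun hb => hj (hlamBad j hb)
          obtain ⟨hg1, hg2⟩ := hGoodOfNotBad j hnb
          by_cases hpos : 0 < lam j
          · obtain ⟨w, h1, h2, h3⟩ := hg2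
            exact ⟨w, fun _ => ⟨h1, by rw [if_pos hpos]; exact h2, h3⟩⟩
          · obtain ⟨w, h1, h2, h3⟩ := hg1
            exact ⟨w, fun _ => ⟨h1, by rw [if_neg hpos]; exact h2, h3⟩⟩
      choose W hW using hWex
      -- uniform bound on the off-diagonal coordinates
      obtain ⟨pr, -, hprmax⟩ := Finset.exists_max_image (Finset.univ : Finset (Fin n × Fin n))
        (fun p => if lam p.1 ≠ 0 ∧ p.2 ≠ p.1 then |W p.1 p.2| else 0)
        ⟨(j₁, j₁), Finset.mem_univ _⟩
      set a : ℝ := if lam pr.1 ≠ 0 ∧ pr.2 ≠ pr.1 then |W pr.1 pr.2| else 0 with ha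
      have ha0 : 0 ≤ a := by
        rw [ha]; split
        · exact abs_nonneg _
        · exact le_refl 0
      have ha1 : a < 1 := by
        rw [ha]; split
        · next h' => exact (hW pr.1 h'.1).2.2 pr.2 h'.2
        · norm_num
      have haW : ∀ j, lam j ≠ 0 → ∀ i, i ≠ j → |W j i| ≤ a := by
        intro j hj i hi
        have h' := hprmax (j, i) (Finset.mem_univ _)
        simpa [hj, hi] using h'
      set R : ℝ := (1 + a)/2 with hR
      have hR0 : 0 ≤ R := by rw [hR]; linarith
      have hR1 : R < 1 := by rw [hR]; linarith
      have haR : a ≤ R := by rw [hR]; linarith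
      set q : Fin n → ℝ :=
        fun i => if lam i ≠ 0 then -(1-R) * (if 0 < lam i then 1 else -1) else 0 with hq
      have hdq : ∀ j, lam j ≠ 0 → dist q (W j) ≤ R := by
        intro j hj
        rw [dist_pi_le_iff hR0]
        intro i
        rw [Real.dist_eq]
        by_cases hij : i = j
        · subst hij
          obtain ⟨-, h2, -⟩ := hW i hj
          rw [h2]
          have hqi : q i = -(1-R) * (if 0 < lam i then 1 else -1) := by
            rw [hq]; exact if_pos hj
          rw [hqi]
          by_cases hpos : 0 < lam i
          · rw [if_pos hpos, if_pos hpos]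
            have : -(1-R) * 1 - (-1) = R := by ring
            rw [this, abs_of_nonneg hR0]
          · rw [if_neg hpos, if_neg hpos]
            have : -(1-R) * (-1) - 1 = -R := by ring
            rw [this, abs_neg, abs_of_nonneg hR0]
        · have hWa : |W j i| ≤ a := haW j hj i hij
          by_cases hi' : lam i ≠ 0
          · have hqi : |q i| = 1 - R := by
              rw [hq]
              simp only [if_pos hi']
              rw [abs_mul]
              have h1 : |-(1-R)| = 1 - R := by rw [abs_neg, abs_of_nonneg (by linarith)]
              have h2 : |(if 0 < lam i then (1:ℝ) else -1)| = 1 := by split <;> norm_num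
              rw [h1, h2, mul_one]
            have h3 : |q i - W j i| ≤ |q i| + |W j i| := by
              have := abs_add_le (q i) (-(W j i))
              simpa [sub_eq_add_neg, abs_neg] using this
            rw [hqi] at h3
            have : (1-R) + a = R := by rw [hR]; ring
            linarith
          · have hqi : q i = 0 := by rw [hq]; exact if_neg hi'
            rw [hqi]
            have : |0 - W j i| = |W j i| := by rw [zero_sub, abs_neg]
            rw [this]
            linarith
      -- the retracted point violates f ≥ 0 on C
      set x := (g q : Fin n → ℝ) with hx
      have hxC : x ∈ C := (g q).2
      have hxd : ∀ j, lam j ≠ 0 → |x j - W j j| ≤ R := by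
        intro j hj
        obtain ⟨h1, -, -⟩ := hW j hj
        have h2 := le_trans (hgd q (W j) h1) (hdq j hj)
        have h3 := dist_le_pi_dist x (W j) j
        rw [Real.dist_eq] at h3
        exact le_trans h3 h2
      have hterm : ∀ j, lam j ≠ 0 → x j * lam j < 0 := by
        intro j hj
        obtain ⟨-, h2, -⟩ := hW j hj
        have h3 := abs_le.mp (hxd j hj)
        rw [h2] at h3
        by_cases hpos : 0 < lam j
        · rw [if_pos hpos] at h3
          have hxj : x j ≤ -1 + R := by linarith [h3.2]
          have : x j < 0 := by linarith
          exact mul_neg_of_neg_of_pos this hpos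
        · rw [if_neg hpos] at h3
          have hxj : 1 - R ≤ x j := by linarith [h3.1]
          have hxj0 : 0 < x j := by linarith
          have hneg : lam j < 0 := lt_of_le_of_ne (not_lt.mp hpos) hj
          exact mul_neg_of_pos_of_neg hxj0 hneg
      have hsum : f x < 0 := by
        rw [hfrep]
        have h1 : ∑ i, x i * lam i < ∑ _i : Fin n, (0:ℝ) := by
          refine Finset.sum_lt_sum (fun i _ => ?_) ⟨j₁, Finset.mem_univ _, hterm j₁ hj₁⟩
          by_cases hi : lam i = 0
          · rw [hi, mul_zero]
          · exact (hterm i hi).le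
        rwa [Finset.sum_const_zero] at h1
      exact absurd (hfC0 x hxC) (not_le.mpr hsum)
end

section
/- Let P' := { x ∈ ℝ^4 : x_1 ≤ 0 and 3x_1 ≤ x_2 + x_3 + x_4 }, regarded as a subset of l∞^4. Then the map r : l∞^4 → P' defined by r(x_1,x_2,x_3,x_4) := ( min{ x_1, 0, (x_2 + x_3 + x_4)/3 }, x_2, x_3, x_4 ) is a 1-Lipschitz retraction of l∞^4 onto P' (i.e. r is 1-Lipschitz, r(l∞^4) ⊂ P' and r|_{P'} = id); consequently P' is injective. -/
open Set Metric

/-!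
`l∞ⁿ` is injective because a real-valued 1-Lipschitz function extends from any subset
(McShane), so a map into `l∞ⁿ` extends coordinate by coordinate. A 1-Lipschitz retract of an
injective space is injective: extend into the big space, then retract. The map `r` changes only
the first coordinate, replacing it by a minimum of 1-Lipschitz functions of `x` (namely `x₁`, `0`
and the mean of `x₂, x₃, x₄`), so it is 1-Lipschitz for the sup metric.
-/

theorem isInjectiveMetricSpace_pi_real (ι : Type) [Fintype ι] :
    IsInjectiveMetricSpace (ι → ℝ) := by
  intro A B _ _ i f hi hf
  have hext : LipschitzOnWith 1 (Function.extend i f 0) (range i) := by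
    refine LipschitzOnWith.of_dist_le_mul ?_
    rintro _ ⟨a₁, rfl⟩ _ ⟨a₂, rfl⟩
    simpa only [hi.injective.extend_apply, hi.dist_eq] using hf.dist_le_mul a₁ a₂
  obtain ⟨g, hg, hgf⟩ := hext.extend_pi
  exact ⟨g, hg, fun a => (hgf (mem_range_self a)).symm.trans (hi.injective.extend_apply _ _ a)⟩

theorem IsInjectiveMetricSpace.of_retraction {X : Type} [MetricSpace X]
    (hX : IsInjectiveMetricSpace X) {S : Set X} {r : X → X} (hr : LipschitzWith 1 r)
    (hrS : ∀ x, r x ∈ S) (hr_fix : ∀ x ∈ S, r x = x) : IsInjectiveMetricSpace S := by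
  intro A B _ _ i f hi hf
  obtain ⟨g, hg, hgf⟩ := hX A B i (Subtype.val ∘ f) hi <| by
    simpa only [mul_one] using (LipschitzWith.subtype_val S).comp hf
  have hrg : LipschitzWith 1 (r ∘ g) := by simpa only [mul_one] using hr.comp hg
  refine ⟨fun b => ⟨r (g b), hrS _⟩, hrg.subtype_mk _, fun a => ?_⟩
  exact Subtype.ext <| (congrArg r (hgf a)).trans (hr_fix _ (f a).2)

theorem LipschitzWith.update {ι α : Type*} [Fintype ι] [DecidableEq ι] [PseudoMetricSpace α]
    {φ : (ι → α) → α} (hφ : LipschitzWith 1 φ) (i₀ : ι) :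
    LipschitzWith 1 fun x => Function.update x i₀ (φ x) := by
  refine LipschitzWith.of_dist_le_mul fun x y => ?_
  rw [NNReal.coe_one, one_mul, dist_pi_le_iff dist_nonneg]
  intro j
  rcases eq_or_ne j i₀ with rfl | hj
  · simpa using hφ.dist_le_mul x y
  · simpa [Function.update_of_ne hj] using dist_le_pi_dist x y j

theorem lipschitzWith_one_sum_div_card {ι : Type*} [Fintype ι] (s : Finset ι) :
    LipschitzWith 1 fun x : ι → ℝ => (∑ i ∈ s, x i) / s.card := by
  refine LipschitzWith.of_dist_le_mul fun x y => ?_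
  rw [NNReal.coe_one, one_mul, Real.dist_eq, ← sub_div, ← Finset.sum_sub_distrib, abs_div,
    Nat.abs_cast]
  rcases s.eq_empty_or_nonempty with rfl | hs
  · simp
  rw [div_le_iff₀ (by exact_mod_cast hs.card_pos)]
  calc |∑ i ∈ s, (x i - y i)| ≤ ∑ i ∈ s, |x i - y i| := Finset.abs_sum_le_sum_abs _ _
    _ ≤ ∑ _i ∈ s, dist x y := Finset.sum_le_sum fun i _ => by
        simpa only [Real.dist_eq] using dist_le_pi_dist x y i
    _ = dist x y * s.card := by rw [Finset.sum_const, nsmul_eq_mul, mul_comm]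

/-- Example: for `P' = {x ∈ l∞⁴ : x₁ ≤ 0, 3x₁ ≤ x₂ + x₃ + x₄}`, the map
`r(x) = (min{x₁, 0, (x₂+x₃+x₄)/3}, x₂, x₃, x₄)` is a `1`-Lipschitz retraction of `l∞⁴`
onto `P'`; consequently `P'` is injective. -/
theorem retract_onto_P'_injective (P' : Set (Fin 4 → ℝ))
    (hP' : P' = {x | x 0 ≤ 0 ∧ 3 * x 0 ≤ x 1 + x 2 + x 3})
    (r : (Fin 4 → ℝ) → (Fin 4 → ℝ))
    (hr : r = fun x i =>
      if i = 0 then min (x 0) (min 0 ((x 1 + x 2 + x 3) / 3)) else x i) :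
    LipschitzWith 1 r ∧ (∀ x, r x ∈ P') ∧ (∀ x ∈ P', r x = x) ∧
      IsInjectiveSubset P' := by
  have hmean : LipschitzWith 1 fun x : Fin 4 → ℝ => (x 1 + x 2 + x 3) / 3 := by
    simpa [Finset.sum_insert, add_assoc] using
      lipschitzWith_one_sum_div_card ({1, 2, 3} : Finset (Fin 4))
  have hφ :
      LipschitzWith 1 fun x : Fin 4 → ℝ => min (x 0) (min 0 ((x 1 + x 2 + x 3) / 3)) := by
    simpa only [max_self] using (LipschitzWith.eval (α := fun _ => ℝ) 0).min (hmean.const_min 0)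
  have hr_update :
      r = fun x => Function.update x 0 (min (x 0) (min 0 ((x 1 + x 2 + x 3) / 3))) := by
    subst hr
    funext x i
    rw [Function.update_apply]
  have hlip : LipschitzWith 1 r := hr_update ▸ hφ.update 0
  have hmem : ∀ x, r x ∈ P' := by
    intro x
    have hle : min (x 0) (min 0 ((x 1 + x 2 + x 3) / 3)) ≤ min 0 ((x 1 + x 2 + x 3) / 3) :=
      min_le_right _ _
    simp only [hP', hr_update, mem_ofPred_eq, Function.update_self, ne_eq, Fin.reduceEq,
      not_false_eq_true, Function.update_of_ne]
    exact ⟨hle.trans (min_le_left _ _), by linarith [hle.trans (min_le_right _ _)]⟩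
  have hfix : ∀ x ∈ P', r x = x := by
    rw [hP']
    rintro x ⟨hx₀, hx⟩
    simp only [hr_update]
    rw [min_eq_left (le_min hx₀ (by linarith)), Function.update_eq_self]
  exact ⟨hlip, hmem, hfix, (isInjectiveMetricSpace_pi_real _).of_retraction hlip hmem hfix⟩
end

section
/- The plane V := { x ∈ ℝ^3 : x_1 + x_2 + x_3 = 0 }, regarded as a subset of l∞^3, is not injective. -/
open Set Metric

/-- The plane `V = {x ∈ l∞³ : x₁ + x₂ + x₃ = 0}` is not injective. -/
theorem plane_sum_zero_not_injective :
    ¬ IsInjectiveSubset {x : Fin 3 → ℝ | x 0 + x 1 + x 2 = 0} := by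
  intro h
  set V : Set (Fin 3 → ℝ) := {x : Fin 3 → ℝ | x 0 + x 1 + x 2 = 0} with hVdef
  set a1 : Fin 3 → ℝ := ![2, -1, -1] with ha1
  set a2 : Fin 3 → ℝ := ![-1, 2, -1] with ha2
  set a3 : Fin 3 → ℝ := ![-1, -1, 2] with ha3
  set b : Fin 3 → ℝ := ![1/2, 1/2, 1/2] with hb
  set A : Set (Fin 3 → ℝ) := {a1, a2, a3} with hA
  set B : Set (Fin 3 → ℝ) := {a1, a2, a3, b} with hB
  have hAB : A ⊆ B := by
    intro x hx
    rcases hx with rfl | rfl | rfl <;> simp [hB]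
  have hAV : ∀ x ∈ A, x ∈ V := by
    intro x hx
    rcases hx with rfl | rfl | rfl <;>
      simp [hVdef, ha1, ha2, ha3] <;> norm_num
  let f : A → V := fun x => ⟨x.1, hAV x.1 x.2⟩
  have hiso : Isometry (Set.inclusion hAB) := fun x y => rfl
  have hfiso : Isometry f := fun x y => rfl
  obtain ⟨g, hg, hgi⟩ := h A B (Set.inclusion hAB) f hiso hfiso.lipschitz
  have hbB : b ∈ B := by simp [hB]
  set p := g ⟨b, hbB⟩ with hp
  -- key estimate: p is within 3/2 of each aᵢ
  have key : ∀ (a : Fin 3 → ℝ) (haA : a ∈ A), dist b a ≤ 3/2 → dist p.1 a ≤ 3/2 := by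
    intro a haA hda
    have h1 : g (Set.inclusion hAB ⟨a, haA⟩) = f ⟨a, haA⟩ := hgi ⟨a, haA⟩
    have h2 : dist p (f ⟨a, haA⟩) ≤ dist (⟨b, hbB⟩ : B) (Set.inclusion hAB ⟨a, haA⟩) := by
      rw [← h1]
      simpa using hg.dist_le_mul ⟨b, hbB⟩ (Set.inclusion hAB ⟨a, haA⟩)
    have h3 : dist (⟨b, hbB⟩ : B) (Set.inclusion hAB ⟨a, haA⟩) = dist b a := rfl
    have h4 : dist p (f ⟨a, haA⟩) = dist p.1 a := rfl
    rw [h3, h4] at h2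
    linarith
  have hd : ∀ a ∈ A, dist b a ≤ 3/2 := by
    intro a haA
    rw [dist_pi_le_iff (by norm_num)]
    intro i
    rcases haA with rfl | rfl | rfl <;> fin_cases i <;>
      simp [hb, ha1, ha2, ha3, Real.dist_eq] <;> norm_num [abs_le]
  have hmemA : ∀ a ∈ ({a1, a2, a3} : Set (Fin 3 → ℝ)), a ∈ A := fun a ha => ha
  have k1 := key a1 (by simp [hA]) (hd a1 (by simp [hA]))
  have k2 := key a2 (by simp [hA]) (hd a2 (by simp [hA]))
  have k3 := key a3 (by simp [hA]) (hd a3 (by simp [hA]))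
  have c1 : dist (p.1 0) (a1 0) ≤ 3/2 := le_trans (dist_le_pi_dist p.1 a1 0) k1
  have c2 : dist (p.1 1) (a2 1) ≤ 3/2 := le_trans (dist_le_pi_dist p.1 a2 1) k2
  have c3 : dist (p.1 2) (a3 2) ≤ 3/2 := le_trans (dist_le_pi_dist p.1 a3 2) k3
  have e1 : a1 0 = 2 := by simp [ha1]
  have e2 : a2 1 = 2 := by simp [ha2]
  have e3 : a3 2 = 2 := by simp [ha3]
  rw [e1, Real.dist_eq, abs_le] at c1
  rw [e2, Real.dist_eq, abs_le] at c2
  rw [e3, Real.dist_eq, abs_le] at c3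
  have hsum : p.1 0 + p.1 1 + p.1 2 = 0 := p.2
  linarith [c1.1, c2.1, c3.1]
end
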